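/- arXiv:2302.14792 — 6 statements merged into one kernel-verified Lean document; each statement's English description precedes it below -/
import Mathlib

section
/- Let Q be a quiver of type A_n (n ≥ 2), θ : ℤⁿ → ℝ a linear stability function, and F(k) = Σ_{0<i≤k} θ(dim S_i) for 0 ≤ k ≤ n. For 0 ≤ a < b ≤ n, the interval representation M_{(a,b]} is θ-semistable if and only if: (1) F(a) = F(b); (2) F(x) ≤ F(a) for every x with a < x < b such that the arrow α_x points left; and (3) F(y) ≥ F(b) for every y with a < y < b such that the arrow α_y points right. Furthermore, if all the inequalities in (2) and (3) are strict, then M_{(a,b]} is θ-stable. -/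
/-!
Stability for quivers of type `Aₙ` (vertices `1, …, n`; for `1 ≤ x ≤ n-1` the arrow `α_x`
joins `x` and `x+1`, and `pointsLeft x` means that it goes from `x+1` to `x`).

Since each space of the interval representation `M_{(a,b]}` is either `k` or `0`, we model it
by the family of subspaces of `k` which are `⊤` on `(a,b]` and `⊥` elsewhere, with identity
structure maps inside the support.  A subrepresentation is a family of subspaces of these
spaces preserved by the structure maps (preservation is automatic for the zero maps, and for
the identity maps it amounts to an inclusion of subspaces in the direction of the arrow).
-/

noncomputable section

/-- A subrepresentation `M′ ⊆ M_{(a,b]}`. -/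
structure IntervalSubrep (k : Type*) [Field k] (n : ℕ) (pointsLeft : ℕ → Prop)
    (a b : ℕ) where
  /-- the subspace of `M_{(a,b]}(i)` at the vertex `i` -/
  U : ℕ → Submodule k k
  zero_outside : ∀ i : ℕ, ¬(a < i ∧ i ≤ b) → U i = ⊥
  pres_left : ∀ x : ℕ, 1 ≤ x → x ≤ n - 1 → a < x → x + 1 ≤ b → pointsLeft x →
    U (x + 1) ≤ U x
  pres_right : ∀ x : ℕ, 1 ≤ x → x ≤ n - 1 → a < x → x + 1 ≤ b → ¬ pointsLeft x →
    U x ≤ U (x + 1)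

/-- The dimension vector of `M_{(a,b]}`:  `1` exactly on the vertices `a < i ≤ b`
(the vertex `i ∈ {1, …, n}` corresponds to the index `i - 1 : Fin n`). -/
def dimInterval (n a b : ℕ) : Fin n → ℤ :=
  fun i => if a < (i : ℕ) + 1 ∧ (i : ℕ) + 1 ≤ b then 1 else 0

/-- The dimension vector of a subrepresentation of `M_{(a,b]}`. -/
def subrepDim {k : Type*} [Field k] {n : ℕ} {pointsLeft : ℕ → Prop} {a b : ℕ}
    (M : IntervalSubrep k n pointsLeft a b) : Fin n → ℤ :=
  fun i => (Module.finrank k (M.U ((i : ℕ) + 1)) : ℤ)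

/-- `M_{(a,b]}` is `θ`-semistable:  `θ(dim M) = 0` and `θ(dim M′) ≤ 0` for every
subrepresentation `M′ ⊆ M_{(a,b]}`. -/
def IsSemistable (k : Type*) [Field k] (n : ℕ) (pointsLeft : ℕ → Prop)
    (θ : (Fin n → ℤ) →+ ℝ) (a b : ℕ) : Prop :=
  θ (dimInterval n a b) = 0 ∧
  ∀ M : IntervalSubrep k n pointsLeft a b, θ (subrepDim M) ≤ 0

/-- `M_{(a,b]}` is `θ`-stable:  in addition `θ(dim M′) < 0` for every subrepresentation
with `0 ≠ M′ ⊊ M_{(a,b]}`. -/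
def IsStable (k : Type*) [Field k] (n : ℕ) (pointsLeft : ℕ → Prop)
    (θ : (Fin n → ℤ) →+ ℝ) (a b : ℕ) : Prop :=
  IsSemistable k n pointsLeft θ a b ∧
  ∀ M : IntervalSubrep k n pointsLeft a b,
    (∃ i : ℕ, M.U i ≠ ⊥) → (∃ i : ℕ, a < i ∧ i ≤ b ∧ M.U i ≠ ⊤) →
      θ (subrepDim M) < 0

/-!
A subrepresentation `M′` of `M_{(a,b]}` is a `0/1` function `χ` on `(a,b]`, and
`θ(dim M′) = ∑ χ(i) (F i - F (i-1))`.  Summing by parts against `F - F a`, and using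
`F a = F b`, this is `∑_{a<d<b} (χ d - χ (d+1)) (F d - F a)`.  A jump of `χ` at `d` is only
possible downwards if `α_d` points left and upwards if it points right, so conditions (2) and (3)
make every term `≤ 0` (and `< 0` at a jump, which every proper nonzero `M′` has).  Conversely,
the subrepresentations `M_{(a,x]}` (`α_x` pointing left) and `M_{(y,b]}` (`α_y` pointing right)
give (2) and (3).
-/

lemma dimInterval_add {n c d e : ℕ} (hcd : c ≤ d) (hde : d ≤ e) :
    dimInterval n c d + dimInterval n d e = dimInterval n c e := by
  funext j
  simp only [Pi.add_apply, dimInterval]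
  split_ifs <;> omega

lemma dimInterval_pred_self_apply {n : ℕ} (i : ℕ) (j : Fin n) :
    dimInterval n (i - 1) i j = if i = (j : ℕ) + 1 then 1 else 0 := by
  simp only [dimInterval]
  split_ifs <;> omega

section Theta

variable {n : ℕ} {θ : (Fin n → ℤ) →+ ℝ} {F : ℕ → ℝ}

lemma theta_dimInterval_zero
    (hF : ∀ m : ℕ, F m = ∑ i ∈ Finset.Icc 1 m, θ (dimInterval n (i - 1) i)) (m : ℕ) :
    θ (dimInterval n 0 m) = F m := by
  induction m with
  | zero =>
    rw [hF, Finset.Icc_eq_empty (by omega), Finset.sum_empty,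
      show dimInterval n 0 0 = 0 from funext fun _ ↦ if_neg (by omega), map_zero]
  | succ m ih =>
    rw [← dimInterval_add (Nat.zero_le m) m.le_succ, map_add, ih, hF, hF,
      Finset.sum_Icc_succ_top (by omega), Nat.add_sub_cancel]

lemma theta_dimInterval
    (hF : ∀ m : ℕ, F m = ∑ i ∈ Finset.Icc 1 m, θ (dimInterval n (i - 1) i)) {c d : ℕ}
    (hcd : c ≤ d) : θ (dimInterval n c d) = F d - F c := by
  rw [← theta_dimInterval_zero hF, ← theta_dimInterval_zero hF,
    ← dimInterval_add (Nat.zero_le c) hcd, map_add]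
  ring

end Theta

lemma sum_Ioc_mul_sub_pred_eq_by_parts (χ F : ℕ → ℝ) {a b : ℕ} (hab : a ≤ b) :
    ∑ i ∈ Finset.Ioc a b, χ i * (F i - F (i - 1)) =
      χ b * (F b - F a) + ∑ i ∈ Finset.Ico a b, (χ i - χ (i + 1)) * (F i - F a) := by
  induction b, hab using Nat.le_induction with
  | base => simp
  | succ b hab ih =>
    rw [Finset.sum_Ioc_succ_top hab, Finset.sum_Ico_succ_top hab, ih, Nat.add_sub_cancel]
    ring

lemma exists_ne_succ_of_ne {α : Type*} (f : ℕ → α) {a b i j : ℕ} (hai : a < i) (hib : i ≤ b)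
    (haj : a < j) (hjb : j ≤ b) (hij : f i ≠ f j) :
    ∃ d, a < d ∧ d < b ∧ f d ≠ f (d + 1) := by
  by_contra! hconst
  have hfa : ∀ m, a + 1 ≤ m → m ≤ b → f m = f (a + 1) := by
    intro m ham
    induction m, ham using Nat.le_induction with
    | base => exact fun _ ↦ rfl
    | succ m ham ih => exact fun hmb ↦ (hconst m (by omega) (by omega)).symm.trans (ih (by omega))
  exact hij ((hfa i hai hib).trans (hfa j haj hjb).symm)

namespace IntervalSubrep

variable {k : Type*} [Field k] {n : ℕ} {pointsLeft : ℕ → Prop} {a b : ℕ}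

def dim (M : IntervalSubrep k n pointsLeft a b) (i : ℕ) : ℝ := Module.finrank k (M.U i)

lemma dim_of_eq_top {M : IntervalSubrep k n pointsLeft a b} {i : ℕ} (h : M.U i = ⊤) :
    M.dim i = 1 := by
  rw [dim, h, finrank_top, Module.finrank_self, Nat.cast_one]

lemma dim_of_eq_bot {M : IntervalSubrep k n pointsLeft a b} {i : ℕ} (h : M.U i = ⊥) :
    M.dim i = 0 := by
  rw [dim, h, finrank_bot, Nat.cast_zero]

lemma subrepDim_eq_sum (M : IntervalSubrep k n pointsLeft a b) :
    subrepDim M = ∑ i ∈ Finset.Ioc a b,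
      (Module.finrank k (M.U i) : ℤ) • dimInterval n (i - 1) i := by
  funext j
  simp only [Finset.sum_apply, Pi.smul_apply, dimInterval_pred_self_apply, smul_eq_mul, mul_ite,
    mul_one, mul_zero, Finset.sum_ite_eq', subrepDim]
  split_ifs with h
  · rfl
  · rw [M.zero_outside _ (by simpa using h), finrank_bot, Nat.cast_zero]

lemma theta_subrepDim {θ : (Fin n → ℤ) →+ ℝ} {F : ℕ → ℝ}
    (hF : ∀ m : ℕ, F m = ∑ i ∈ Finset.Icc 1 m, θ (dimInterval n (i - 1) i))
    (M : IntervalSubrep k n pointsLeft a b) :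
    θ (subrepDim M) = ∑ i ∈ Finset.Ioc a b, M.dim i * (F i - F (i - 1)) := by
  rw [subrepDim_eq_sum, map_sum]
  refine Finset.sum_congr rfl fun i _ ↦ ?_
  rw [map_zsmul, theta_dimInterval hF (Nat.sub_le i 1), zsmul_eq_mul, dim, Int.cast_natCast]

lemma eq_succ_or_jump (M : IntervalSubrep k n pointsLeft a b) (hbn : b ≤ n) {d : ℕ}
    (had : a < d) (hdb : d < b) :
    M.U d = M.U (d + 1) ∨ (M.U d = ⊤ ∧ M.U (d + 1) = ⊥ ∧ pointsLeft d) ∨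
      (M.U d = ⊥ ∧ M.U (d + 1) = ⊤ ∧ ¬ pointsLeft d) := by
  rcases eq_bot_or_eq_top (M.U d) with hd | hd <;>
    rcases eq_bot_or_eq_top (M.U (d + 1)) with hd' | hd'
  · exact .inl (hd.trans hd'.symm)
  · refine .inr (.inr ⟨hd, hd', fun hl ↦ ?_⟩)
    simpa [hd, hd'] using M.pres_left d (by omega) (by omega) had hdb hl
  · refine .inr (.inl ⟨hd, hd', by_contra fun hr ↦ ?_⟩)
    simpa [hd, hd'] using M.pres_right d (by omega) (by omega) had hdb hr
  · exact .inl (hd.trans hd'.symm)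

lemma jump_term_nonpos (M : IntervalSubrep k n pointsLeft a b) (hbn : b ≤ n) {F : ℕ → ℝ}
    (hFab : F a = F b) (hleft : ∀ x : ℕ, a < x → x < b → pointsLeft x → F x ≤ F a)
    (hright : ∀ y : ℕ, a < y → y < b → ¬ pointsLeft y → F b ≤ F y) {d : ℕ}
    (had : a ≤ d) (hdb : d < b) : (M.dim d - M.dim (d + 1)) * (F d - F a) ≤ 0 := by
  rcases had.eq_or_lt with rfl | had
  · simp
  rcases M.eq_succ_or_jump hbn had hdb with heq | ⟨hd, hd', hl⟩ | ⟨hd, hd', hr⟩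
  · rw [dim, dim, heq, sub_self, zero_mul]
  · rw [dim_of_eq_top hd, dim_of_eq_bot hd']
    linarith [hleft d had hdb hl]
  · rw [dim_of_eq_bot hd, dim_of_eq_top hd']
    linarith [hright d had hdb hr]

lemma jump_term_neg (M : IntervalSubrep k n pointsLeft a b) (hbn : b ≤ n) {F : ℕ → ℝ}
    (hFab : F a = F b) (hleft : ∀ x : ℕ, a < x → x < b → pointsLeft x → F x < F a)
    (hright : ∀ y : ℕ, a < y → y < b → ¬ pointsLeft y → F b < F y) {d : ℕ}
    (had : a < d) (hdb : d < b) (hjump : M.U d ≠ M.U (d + 1)) :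
    (M.dim d - M.dim (d + 1)) * (F d - F a) < 0 := by
  rcases M.eq_succ_or_jump hbn had hdb with heq | ⟨hd, hd', hl⟩ | ⟨hd, hd', hr⟩
  · exact absurd heq hjump
  · rw [dim_of_eq_top hd, dim_of_eq_bot hd']
    linarith [hleft d had hdb hl]
  · rw [dim_of_eq_bot hd, dim_of_eq_top hd']
    linarith [hright d had hdb hr]

lemma theta_subrepDim_eq_sum_jumps {θ : (Fin n → ℤ) →+ ℝ} {F : ℕ → ℝ}
    (hF : ∀ m : ℕ, F m = ∑ i ∈ Finset.Icc 1 m, θ (dimInterval n (i - 1) i))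
    (hab : a ≤ b) (hFab : F a = F b) (M : IntervalSubrep k n pointsLeft a b) :
    θ (subrepDim M) = ∑ d ∈ Finset.Ico a b, (M.dim d - M.dim (d + 1)) * (F d - F a) := by
  rw [theta_subrepDim hF, sum_Ioc_mul_sub_pred_eq_by_parts _ _ hab, hFab, sub_self, mul_zero,
    zero_add]

/-- `M_{(c,d]}` as a subrepresentation of `M_{(a,b]}`: the arrows `α_c` and `α_d`, where they lie
inside `(a,b]`, must not lead out of `(c,d]`. -/
def ofInterval (k : Type*) [Field k] (n : ℕ) (pointsLeft : ℕ → Prop) {a b c d : ℕ}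
    (hac : a ≤ c) (hdb : d ≤ b) (hc : c = a ∨ ¬ pointsLeft c) (hd : d = b ∨ pointsLeft d) :
    IntervalSubrep k n pointsLeft a b where
  U i := if c < i ∧ i ≤ d then ⊤ else ⊥
  zero_outside i hi := if_neg (by omega)
  pres_left x _ _ hax _ hl := by
    split_ifs <;> first | exact le_rfl | exact bot_le | skip
    rcases hc with rfl | hc
    · omega
    · exact absurd (show x = c by omega) (fun h ↦ hc (h ▸ hl))
  pres_right x _ _ _ hxb hr := by
    split_ifs <;> first | exact le_rfl | exact bot_le | skip
    rcases hd with rfl | hd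
    · omega
    · exact absurd (show x = d by omega) (fun h ↦ hr (h ▸ hd))

lemma subrepDim_ofInterval {c d : ℕ} (hac : a ≤ c) (hdb : d ≤ b) (hc : c = a ∨ ¬ pointsLeft c)
    (hd : d = b ∨ pointsLeft d) :
    subrepDim (ofInterval k n pointsLeft hac hdb hc hd) = dimInterval n c d := by
  funext j
  have hU : (ofInterval k n pointsLeft hac hdb hc hd).U (j + 1) =
      if c < j + 1 ∧ j + 1 ≤ d then ⊤ else ⊥ := rfl
  simp only [subrepDim, dimInterval]
  split_ifs at hU ⊢ <;> rw [hU]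
  · rw [finrank_top, Module.finrank_self, Nat.cast_one]
  · rw [finrank_bot, Nat.cast_zero]

end IntervalSubrep

section Stability

variable {k : Type*} [Field k] {n : ℕ} {pointsLeft : ℕ → Prop} {θ : (Fin n → ℤ) →+ ℝ}
  {F : ℕ → ℝ} {a b : ℕ}

open IntervalSubrep

lemma conditions_of_isSemistable
    (hF : ∀ m : ℕ, F m = ∑ i ∈ Finset.Icc 1 m, θ (dimInterval n (i - 1) i)) (hab : a ≤ b)
    (h : IsSemistable k n pointsLeft θ a b) :
    F a = F b ∧ (∀ x : ℕ, a < x → x < b → pointsLeft x → F x ≤ F a) ∧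
      (∀ y : ℕ, a < y → y < b → ¬ pointsLeft y → F b ≤ F y) := by
  refine ⟨?_, fun x hax hxb hl ↦ ?_, fun y hay hyb hr ↦ ?_⟩
  · linarith [theta_dimInterval hF hab ▸ h.1]
  · have := h.2 (ofInterval k n pointsLeft le_rfl hxb.le (.inl rfl) (.inr hl))
    rw [subrepDim_ofInterval, theta_dimInterval hF hax.le] at this
    linarith
  · have := h.2 (ofInterval k n pointsLeft hay.le le_rfl (.inr hr) (.inl rfl))
    rw [subrepDim_ofInterval, theta_dimInterval hF hyb.le] at this
    linarith

lemma isSemistable_of_conditions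
    (hF : ∀ m : ℕ, F m = ∑ i ∈ Finset.Icc 1 m, θ (dimInterval n (i - 1) i)) (hab : a ≤ b)
    (hbn : b ≤ n) (hFab : F a = F b)
    (hleft : ∀ x : ℕ, a < x → x < b → pointsLeft x → F x ≤ F a)
    (hright : ∀ y : ℕ, a < y → y < b → ¬ pointsLeft y → F b ≤ F y) :
    IsSemistable k n pointsLeft θ a b := by
  refine ⟨by rw [theta_dimInterval hF hab, hFab, sub_self], fun M ↦ ?_⟩
  rw [theta_subrepDim_eq_sum_jumps hF hab hFab]
  exact Finset.sum_nonpos fun d hd ↦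
    M.jump_term_nonpos hbn hFab hleft hright (Finset.mem_Ico.1 hd).1 (Finset.mem_Ico.1 hd).2

lemma isStable_of_strict_conditions
    (hF : ∀ m : ℕ, F m = ∑ i ∈ Finset.Icc 1 m, θ (dimInterval n (i - 1) i)) (hab : a ≤ b)
    (hbn : b ≤ n) (hFab : F a = F b)
    (hleft : ∀ x : ℕ, a < x → x < b → pointsLeft x → F x < F a)
    (hright : ∀ y : ℕ, a < y → y < b → ¬ pointsLeft y → F b < F y) :
    IsStable k n pointsLeft θ a b := by
  have hleft' x hax hxb hl := (hleft x hax hxb hl).le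
  have hright' y hay hyb hr := (hright y hay hyb hr).le
  refine ⟨isSemistable_of_conditions hF hab hbn hFab hleft' hright',
    fun M ⟨i, hi⟩ ⟨j, haj, hjb, hj⟩ ↦ ?_⟩
  have hai : a < i ∧ i ≤ b := by_contra fun h ↦ hi (M.zero_outside i h)
  have hij : M.U i ≠ M.U j := fun h ↦ (eq_bot_or_eq_top (M.U j)).elim (h ▸ hi) hj
  obtain ⟨d, had, hdb, hjump⟩ := exists_ne_succ_of_ne M.U hai.1 hai.2 haj hjb hij
  rw [theta_subrepDim_eq_sum_jumps hF hab hFab]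
  refine Finset.sum_neg' (fun d hd ↦ ?_) ⟨d, Finset.mem_Ico.2 ⟨had.le, hdb⟩, ?_⟩
  · rw [Finset.mem_Ico] at hd
    exact M.jump_term_nonpos hbn hFab hleft' hright' hd.1 hd.2
  · exact M.jump_term_neg hbn hFab hleft hright had hdb hjump

end Stability

theorem semistable_iff_F_general (k : Type*) [Field k] (n : ℕ)
    (pointsLeft : ℕ → Prop) (θ : (Fin n → ℤ) →+ ℝ)
    (F : ℕ → ℝ) (hF : ∀ m : ℕ, F m = ∑ i ∈ Finset.Icc 1 m, θ (dimInterval n (i - 1) i))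
    (a b : ℕ) (hab : a < b) (hbn : b ≤ n) :
    (IsSemistable k n pointsLeft θ a b ↔
      (F a = F b ∧
        (∀ x : ℕ, a < x → x < b → pointsLeft x → F x ≤ F a) ∧
        (∀ y : ℕ, a < y → y < b → ¬ pointsLeft y → F b ≤ F y))) ∧
    ((F a = F b ∧
        (∀ x : ℕ, a < x → x < b → pointsLeft x → F x < F a) ∧
        (∀ y : ℕ, a < y → y < b → ¬ pointsLeft y → F b < F y)) →
      IsStable k n pointsLeft θ a b) :=
  ⟨⟨conditions_of_isSemistable hF hab.le,
      fun ⟨hFab, hleft, hright⟩ ↦ isSemistable_of_conditions hF hab.le hbn hFab hleft hright⟩,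
    fun ⟨hFab, hleft, hright⟩ ↦ isStable_of_strict_conditions hF hab.le hbn hFab hleft hright⟩

/-- Proposition 1.1:  with `F k = θ(dim M_{(0,k]}) = ∑_{0 < i ≤ k} θ(dim Sᵢ)`,
the module `M_{(a,b]}` is `θ`-semistable iff `F a = F b`, `F x ≤ F a` whenever `α_x`
points left and `a < x < b`, and `F y ≥ F b` whenever `α_y` points right and `a < y < b`;
and if all these inequalities are strict then `M_{(a,b]}` is `θ`-stable. -/
theorem semistable_iff_F (k : Type*) [Field k] (n : ℕ) (hn : 2 ≤ n)
    (pointsLeft : ℕ → Prop) (θ : (Fin n → ℤ) →+ ℝ)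
    (F : ℕ → ℝ) (hF : ∀ m : ℕ, F m = ∑ i ∈ Finset.Icc 1 m, θ (dimInterval n (i - 1) i))
    (a b : ℕ) (hab : a < b) (hbn : b ≤ n) :
    (IsSemistable k n pointsLeft θ a b ↔
      (F a = F b ∧
        (∀ x : ℕ, a < x → x < b → pointsLeft x → F x ≤ F a) ∧
        (∀ y : ℕ, a < y → y < b → ¬ pointsLeft y → F b ≤ F y))) ∧
    ((F a = F b ∧
        (∀ x : ℕ, a < x → x < b → pointsLeft x → F x < F a) ∧
        (∀ y : ℕ, a < y → y < b → ¬ pointsLeft y → F b < F y)) →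
      IsStable k n pointsLeft θ a b) :=
  semistable_iff_F_general k n pointsLeft θ F hF a b hab hbn

end
end

section
/- Let F be a useful function with decomposition F = f + Σ_{x∈ℝ} u_x⁻ Δx⁻ + Σ_{x∈ℝ} u_x⁺ Δx⁺ and let a ∈ ℝ. Then: (1) the left limit lim_{x→a⁻} F(x) exists; (2) the right limit lim_{x→a⁺} F(x) exists; (3) F(a) = lim_{x→a⁻} F(x) + u_a⁻ and F(a) + u_a⁺ = lim_{x→a⁺} F(x). Moreover the limits lim_{x→−∞} F(x) and lim_{x→+∞} F(x) exist. -/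
/-!
Useful functions:  `F = f + ∑_{x ∈ ℝ} u_x⁻ Δx⁻ + ∑_{x ∈ ℝ} u_x⁺ Δx⁺` where `f` is continuous
of bounded variation, `Δx⁻`/`Δx⁺` are the indicator functions of `[x,∞)`/`(x,∞)`, and the
coefficient families are absolutely summable.
-/

noncomputable section

open Filter Topology

/-- `Δx⁻`, the indicator function of `[x, ∞)`. -/
def deltaMinus (x : ℝ) : ℝ → ℝ := Set.indicator (Set.Ici x) 1

/-- `Δx⁺`, the indicator function of `(x, ∞)`. -/
def deltaPlus (x : ℝ) : ℝ → ℝ := Set.indicator (Set.Ioi x) 1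

/-- `F` is a useful function, with decomposition data `f` (continuous of bounded variation)
and coefficient families `um = (u_x⁻)`, `up = (u_x⁺)`. -/
structure IsUseful (F f um up : ℝ → ℝ) : Prop where
  cont : Continuous f
  bddVar : BoundedVariationOn f Set.univ
  summable_um : Summable fun x : ℝ => |um x|
  summable_up : Summable fun x : ℝ => |up x|
  decomp : ∀ t : ℝ,
    F t = f t + (∑' x : ℝ, um x * deltaMinus x t) + (∑' x : ℝ, up x * deltaPlus x t)

/-!
Dominated convergence (the coefficients are absolutely summable and the steps are bounded by 1)
passes limits through both jump sums, and each step `Δx^∓` is eventually constant along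
`𝓝[<] a`, `𝓝[>] a`, `atBot` and `atTop`, while the continuous part of bounded variation has
limits at `±∞`. Left of `a` both `Δx⁻` and `Δx⁺` tend to `Δx⁺(a)`, and right of `a` both tend
to `Δx⁻(a)`; as `Δx⁻(a) - Δx⁺(a)` is `1` for `x = a` and `0` otherwise, the jumps at `a` are
exactly `u_a⁻` and `u_a⁺`.
-/

open Set

lemma deltaMinus_apply (x t : ℝ) : deltaMinus x t = if x ≤ t then 1 else 0 := by
  simp [deltaMinus, indicator_apply]

lemma deltaPlus_apply (x t : ℝ) : deltaPlus x t = if x < t then 1 else 0 := by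
  simp [deltaPlus, indicator_apply]

lemma deltaMinus_eq_deltaPlus_add_ite (x t : ℝ) :
    deltaMinus x t = deltaPlus x t + if x = t then 1 else 0 := by
  simp only [deltaMinus_apply, deltaPlus_apply]
  rcases lt_trichotomy x t with hxt | rfl | hxt
  · simp [hxt, hxt.le, hxt.ne]
  · simp
  · simp [hxt.not_ge, hxt.not_gt, hxt.ne']

lemma abs_deltaMinus_le_one (x t : ℝ) : |deltaMinus x t| ≤ 1 := by
  rw [deltaMinus_apply]; split_ifs <;> simp

lemma abs_deltaPlus_le_one (x t : ℝ) : |deltaPlus x t| ≤ 1 := by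
  rw [deltaPlus_apply]; split_ifs <;> simp

def IsUnitStepAt (g : ℝ → ℝ) (x : ℝ) : Prop := EqOn g 0 (Iio x) ∧ EqOn g 1 (Ioi x)

lemma isUnitStepAt_deltaMinus (x : ℝ) : IsUnitStepAt (deltaMinus x) x :=
  ⟨fun _ ht => indicator_of_notMem (notMem_Ici.2 ht) _,
    fun _ ht => indicator_of_mem (mem_Ici.2 ht.le) _⟩

lemma isUnitStepAt_deltaPlus (x : ℝ) : IsUnitStepAt (deltaPlus x) x :=
  ⟨fun _ ht => indicator_of_notMem (notMem_Ioi.2 ht.le) _, fun _ ht => indicator_of_mem ht _⟩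

namespace IsUnitStepAt

variable {g : ℝ → ℝ} {x : ℝ}

lemma tendsto_nhdsLT (hg : IsUnitStepAt g x) (a : ℝ) :
    Tendsto g (𝓝[<] a) (𝓝 (deltaPlus x a)) := by
  refine tendsto_const_nhds.congr' ?_
  rcases lt_or_ge x a with hx | hx
  · filter_upwards [Ioo_mem_nhdsLT hx] with t ht
    rw [deltaPlus_apply, if_pos hx, hg.2 ht.1]; rfl
  · filter_upwards [self_mem_nhdsWithin] with t ht
    rw [deltaPlus_apply, if_neg hx.not_gt, hg.1 (lt_of_lt_of_le ht hx)]; rfl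

lemma tendsto_nhdsGT (hg : IsUnitStepAt g x) (a : ℝ) :
    Tendsto g (𝓝[>] a) (𝓝 (deltaMinus x a)) := by
  refine tendsto_const_nhds.congr' ?_
  rcases le_or_gt x a with hx | hx
  · filter_upwards [self_mem_nhdsWithin] with t ht
    rw [deltaMinus_apply, if_pos hx, hg.2 (lt_of_le_of_lt hx ht)]; rfl
  · filter_upwards [Ioo_mem_nhdsGT hx] with t ht
    rw [deltaMinus_apply, if_neg hx.not_ge, hg.1 ht.2]; rfl

lemma tendsto_atBot (hg : IsUnitStepAt g x) : Tendsto g atBot (𝓝 0) :=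
  tendsto_const_nhds.congr' <| (eventually_lt_atBot x).mono fun _ ht => (hg.1 ht).symm

lemma tendsto_atTop (hg : IsUnitStepAt g x) : Tendsto g atTop (𝓝 1) :=
  tendsto_const_nhds.congr' <| (eventually_gt_atTop x).mono fun _ ht => (hg.2 ht).symm

end IsUnitStepAt

lemma tendsto_tsum_mul_of_abs_le_one {ι α : Type*} {u : ι → ℝ} (hu : Summable fun i => |u i|)
    {l : Filter α} {g : ι → α → ℝ} {c : ι → ℝ} (hg : ∀ i, Tendsto (g i) l (𝓝 (c i)))
    (hg_le : ∀ i t, |g i t| ≤ 1) :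
    Tendsto (fun t => ∑' i, u i * g i t) l (𝓝 (∑' i, u i * c i)) :=
  tendsto_tsum_of_dominated_convergence hu (fun i => (hg i).const_mul (u i)) <|
    .of_forall fun t i => by
      rw [Real.norm_eq_abs, abs_mul]
      exact mul_le_of_le_one_right (abs_nonneg _) (hg_le i t)

lemma tsum_mul_deltaMinus {u : ℝ → ℝ} (hu : Summable fun x => |u x|) (a : ℝ) :
    ∑' x, u x * deltaMinus x a = ∑' x, u x * deltaPlus x a + u a := by
  have hs : Summable fun x => u x * deltaPlus x a := hu.of_norm_bounded fun x => by
    rw [Real.norm_eq_abs, abs_mul]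
    exact mul_le_of_le_one_right (abs_nonneg _) (abs_deltaPlus_le_one x a)
  simp_rw [deltaMinus_eq_deltaPlus_add_ite, mul_add, mul_ite, mul_one, mul_zero]
  rw [hs.tsum_add (hasSum_single a fun x hx => if_neg hx).summable,
    tsum_eq_single a fun x hx => if_neg hx, if_pos rfl]

lemma IsUseful.tendsto {F f um up : ℝ → ℝ} (h : IsUseful F f um up) {l : Filter ℝ} {L : ℝ}
    {cm cp : ℝ → ℝ} (hf : Tendsto f l (𝓝 L)) (hm : ∀ x, Tendsto (deltaMinus x) l (𝓝 (cm x)))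
    (hp : ∀ x, Tendsto (deltaPlus x) l (𝓝 (cp x))) :
    Tendsto F l (𝓝 (L + ∑' x, um x * cm x + ∑' x, up x * cp x)) := by
  rw [show F = _ from funext h.decomp]
  exact (hf.add (tendsto_tsum_mul_of_abs_le_one h.summable_um hm abs_deltaMinus_le_one)).add
    (tendsto_tsum_mul_of_abs_le_one h.summable_up hp abs_deltaPlus_le_one)

/-- Proposition 1.2 (Proposition 2.8 of the paper):  a useful function has one-sided limits
everywhere, `F(a) = F₋(a) + u_a⁻` and `F(a) + u_a⁺ = F₊(a)`, and it has limits at `±∞`. -/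
theorem useful_one_sided_limits (F f um up : ℝ → ℝ) (h : IsUseful F f um up) (a : ℝ) :
    (∃ L : ℝ, Tendsto F (nhdsWithin a (Set.Iio a)) (nhds L) ∧ F a = L + um a) ∧
    (∃ L : ℝ, Tendsto F (nhdsWithin a (Set.Ioi a)) (nhds L) ∧ F a + up a = L) ∧
    (∃ L : ℝ, Tendsto F atBot (nhds L)) ∧
    (∃ L : ℝ, Tendsto F atTop (nhds L)) := by
  refine ⟨⟨_, h.tendsto h.cont.continuousWithinAt
      (fun x => (isUnitStepAt_deltaMinus x).tendsto_nhdsLT a)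
      (fun x => (isUnitStepAt_deltaPlus x).tendsto_nhdsLT a), ?_⟩,
    ⟨_, h.tendsto h.cont.continuousWithinAt
      (fun x => (isUnitStepAt_deltaMinus x).tendsto_nhdsGT a)
      (fun x => (isUnitStepAt_deltaPlus x).tendsto_nhdsGT a), ?_⟩,
    ⟨_, h.tendsto h.bddVar.tendsto_atBot_limUnder
      (fun x => (isUnitStepAt_deltaMinus x).tendsto_atBot)
      (fun x => (isUnitStepAt_deltaPlus x).tendsto_atBot)⟩,
    ⟨_, h.tendsto h.bddVar.tendsto_atTop_limUnder
      (fun x => (isUnitStepAt_deltaMinus x).tendsto_atTop)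
      (fun x => (isUnitStepAt_deltaPlus x).tendsto_atTop)⟩⟩
  · rw [h.decomp a, tsum_mul_deltaMinus h.summable_um a]
    ring
  · rw [h.decomp a, tsum_mul_deltaMinus h.summable_up a]
    ring

end
end

section
/- Let F be a useful function with coefficients (u_x⁻), (u_x⁺), and let a ∈ ℝ. Then the local variation of F at a equals |u_a⁻| + |u_a⁺|; equivalently, var_F(a) = |F(a) − F₋(a)| + |F₊(a) − F(a)|. -/
/-!
Write `F = f + J` with `J t = ∑_{x ≤ t} u_x⁻ + ∑_{x < t} u_x⁺`. Dominated convergence for the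
two sums gives the one-sided limits `F₋(a) = F(a) - u_a⁻` and `F₊(a) = F(a) + u_a⁺`. The
increments of `J` are dominated by those of the monotone function built in the same way from
`|u⁻|` and `|u⁺|`, so `F` has locally bounded variation. For such a function the variation on
`[a - δ, a]` and on `[a, a + δ]` tends to the size of the jump on that side, and the variation on
`(a - δ, a + δ)` is squeezed between the variations on `[a - δ/2, a + δ/2]` and `[a - δ, a + δ]`.
-/

noncomputable section

open Filter Topology

open Set

theorem eVariationOn_le_add_of_edist_le {α E E' E'' : Type*} [LinearOrder α]
    [PseudoEMetricSpace E] [PseudoEMetricSpace E'] [PseudoEMetricSpace E'']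
    {f : α → E} {g : α → E'} {h : α → E''} {s : Set α}
    (hfgh : ∀ x ∈ s, ∀ y ∈ s, edist (f x) (f y) ≤ edist (g x) (g y) + edist (h x) (h y)) :
    eVariationOn f s ≤ eVariationOn g s + eVariationOn h s := by
  refine iSup_le fun ⟨n, u, hu, hus⟩ => ?_
  calc ∑ i ∈ Finset.range n, edist (f (u (i + 1))) (f (u i))
      ≤ ∑ i ∈ Finset.range n,
          (edist (g (u (i + 1))) (g (u i)) + edist (h (u (i + 1))) (h (u i))) :=
        Finset.sum_le_sum fun i _ => hfgh _ (hus _) _ (hus _)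
    _ = _ := Finset.sum_add_distrib
    _ ≤ eVariationOn g s + eVariationOn h s :=
        add_le_add (eVariationOn.sum_le hu hus) (eVariationOn.sum_le hu hus)

theorem LocallyBoundedVariationOn.tendsto_eVariationOn_Ioo_sub_add {E : Type*}
    [PseudoEMetricSpace E] {g : ℝ → E} (hg : LocallyBoundedVariationOn g univ) {a : ℝ} {l₁ l₂ : E}
    (hl₁ : Tendsto g (𝓝[<] a) (𝓝 l₁)) (hl₂ : Tendsto g (𝓝[>] a) (𝓝 l₂)) :
    Tendsto (fun δ => eVariationOn g (Ioo (a - δ) (a + δ))) (𝓝[>] 0)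
      (𝓝 (edist (g a) l₁ + edist (g a) l₂)) := by
  have hleft : Tendsto (a - ·) (𝓝[>] 0) (𝓝[<] a) := by
    simpa using (continuous_sub_left a).continuousWithinAt.tendsto_nhdsWithin
      (x := 0) (s := Ioi 0) (t := Iio a) fun δ (hδ : 0 < δ) => sub_lt_self a hδ
  have hright : Tendsto (a + ·) (𝓝[>] 0) (𝓝[>] a) := by
    simpa using (continuous_const_add a).continuousWithinAt.tendsto_nhdsWithin
      (x := 0) (s := Ioi 0) (t := Ioi a) fun δ (hδ : 0 < δ) => lt_add_of_pos_right a hδ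
  have hIcc : Tendsto (fun δ => eVariationOn g (Icc (a - δ) (a + δ))) (𝓝[>] 0)
      (𝓝 (edist (g a) l₁ + edist (g a) l₂)) := by
    have hL := (hg.tendsto_eVariationOn_Icc_left (by simpa using hl₁) (mem_univ a)).comp
      (by simpa using hleft)
    have hR := (hg.tendsto_eVariationOn_Icc_right (by simpa using hl₂) (mem_univ a)).comp
      (by simpa using hright)
    refine (hL.add hR).congr' ?_
    filter_upwards [self_mem_nhdsWithin] with δ (hδ : 0 < δ)
    simpa using eVariationOn.Icc_add_Icc g (s := univ) (by linarith : a - δ ≤ a)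
      (by linarith : a ≤ a + δ) (mem_univ a)
  have hhalf : Tendsto (· / 2) (𝓝[>] (0 : ℝ)) (𝓝[>] 0) := by
    simpa using (continuous_id.div_const (2 : ℝ)).continuousWithinAt.tendsto_nhdsWithin
      (x := 0) (s := Ioi 0) (t := Ioi 0) fun δ (hδ : 0 < δ) => half_pos hδ
  refine tendsto_of_tendsto_of_tendsto_of_le_of_le' (hIcc.comp hhalf) hIcc ?_
    (Eventually.of_forall fun δ => eVariationOn.mono g Ioo_subset_Icc_self)
  filter_upwards [self_mem_nhdsWithin] with δ (hδ : 0 < δ)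
  exact eVariationOn.mono g (Icc_subset_Ioo (by linarith) (by linarith))

theorem tendsto_tsum_indicator {ι β G : Type*} [NormedAddCommGroup G] [CompleteSpace G]
    {l : Filter ι} {S : ι → Set β} {T : Set β} {g : β → G} (hg : Summable fun x => ‖g x‖)
    (hST : ∀ x, ∀ᶠ i in l, (x ∈ S i ↔ x ∈ T)) :
    Tendsto (fun i => ∑' x, (S i).indicator g x) l (𝓝 (∑' x, T.indicator g x)) :=
  tendsto_tsum_of_dominated_convergence hg
    (fun x => tendsto_const_nhds.congr' <| (hST x).mono fun i hi => by
      classical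
      simp only [indicator_apply, hi])
    (Eventually.of_forall fun _ _ => norm_indicator_le_norm_self _ _)

theorem tsum_indicator_Iic_eq_add {β G : Type*} [LinearOrder β] [NormedAddCommGroup G]
    [CompleteSpace G] {g : β → G} (hg : Summable g) (a : β) :
    ∑' x, (Iic a).indicator g x = ∑' x, (Iio a).indicator g x + g a := by
  classical
  have hsplit : ∀ x, (Iic a).indicator g x
      = (Iio a).indicator g x + if x = a then g a else 0 := by
    intro x
    rcases lt_trichotomy x a with hx | rfl | hx
    · simp [hx.le, hx, hx.ne]
    · simp
    · simp [not_le.2 hx, not_lt.2 hx.le, hx.ne']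
  rw [tsum_congr hsplit, (hg.indicator _).tsum_add (hasSum_ite_eq a (g a)).summable,
    tsum_ite_eq]

theorem abs_tsum_indicator_le {β : Type*} {g : β → ℝ} (hg : Summable g) (S : Set β) :
    |∑' x, S.indicator g x| ≤ ∑' x, S.indicator (fun x => |g x|) x := by
  simpa only [Real.norm_eq_abs, norm_indicator_eq_indicator_norm] using
    norm_tsum_le_tsum_norm (hg.indicator S).norm

def jumpPart (c d : ℝ → ℝ) (t : ℝ) : ℝ :=
  ∑' x, (Iic t).indicator c x + ∑' x, (Iio t).indicator d x

section JumpPart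

variable {c d : ℝ → ℝ}

theorem tendsto_jumpPart_nhdsLT (hc : Summable c) (hd : Summable d) (a : ℝ) :
    Tendsto (jumpPart c d) (𝓝[<] a) (𝓝 (jumpPart c d a - c a)) := by
  have hmem : ∀ x, ∀ᶠ t in 𝓝[<] a,
      (x ∈ Iic t ↔ x ∈ Iio a) ∧ (x ∈ Iio t ↔ x ∈ Iio a) := by
    intro x
    rcases lt_or_ge x a with hx | hx
    · filter_upwards [Ioo_mem_nhdsLT hx] with t ht
      exact ⟨iff_of_true ht.1.le hx, iff_of_true ht.1 hx⟩
    · filter_upwards [self_mem_nhdsWithin] with t (ht : t < a)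
      exact ⟨iff_of_false (not_le.2 (ht.trans_le hx)) (not_lt.2 hx),
        iff_of_false (not_lt.2 (ht.trans_le hx).le) (not_lt.2 hx)⟩
  have hlim := (tendsto_tsum_indicator hc.norm fun x => (hmem x).mono fun _ ht => ht.1).add
    (tendsto_tsum_indicator hd.norm fun x => (hmem x).mono fun _ ht => ht.2)
  have hval :
      jumpPart c d a - c a = ∑' x, (Iio a).indicator c x + ∑' x, (Iio a).indicator d x := by
    rw [jumpPart, tsum_indicator_Iic_eq_add hc, add_right_comm, add_sub_cancel_right]
  rwa [hval]

theorem tendsto_jumpPart_nhdsGT (hc : Summable c) (hd : Summable d) (a : ℝ) :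
    Tendsto (jumpPart c d) (𝓝[>] a) (𝓝 (jumpPart c d a + d a)) := by
  have hmem : ∀ x, ∀ᶠ t in 𝓝[>] a,
      (x ∈ Iic t ↔ x ∈ Iic a) ∧ (x ∈ Iio t ↔ x ∈ Iic a) := by
    intro x
    rcases le_or_gt x a with hx | hx
    · filter_upwards [self_mem_nhdsWithin] with t (ht : a < t)
      exact ⟨iff_of_true (hx.trans ht.le) hx, iff_of_true (hx.trans_lt ht) hx⟩
    · filter_upwards [Ioo_mem_nhdsGT hx] with t ht
      exact ⟨iff_of_false (not_le.2 ht.2) (not_le.2 hx),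
        iff_of_false (not_lt.2 ht.2.le) (not_le.2 hx)⟩
  have hlim := (tendsto_tsum_indicator hc.norm fun x => (hmem x).mono fun _ ht => ht.1).add
    (tendsto_tsum_indicator hd.norm fun x => (hmem x).mono fun _ ht => ht.2)
  have hval :
      jumpPart c d a + d a = ∑' x, (Iic a).indicator c x + ∑' x, (Iic a).indicator d x := by
    rw [jumpPart, tsum_indicator_Iic_eq_add hd, add_assoc]
  rwa [hval]

theorem jumpPart_sub (hc : Summable c) (hd : Summable d) {s t : ℝ} (hst : s ≤ t) :
    jumpPart c d t - jumpPart c d s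
      = ∑' x, (Ioc s t).indicator c x + ∑' x, (Ico s t).indicator d x := by
  have hIoc : ∀ x,
      (Iic t).indicator c x - (Iic s).indicator c x = (Ioc s t).indicator c x := by
    intro x
    by_cases hxs : x ≤ s
    · simp [hxs, hxs.trans hst]
    · by_cases hxt : x ≤ t <;> simp [hxs, hxt, not_le.1 hxs]
  have hIco : ∀ x,
      (Iio t).indicator d x - (Iio s).indicator d x = (Ico s t).indicator d x := by
    intro x
    by_cases hxs : x < s
    · simp [hxs, hxs.trans_le hst]
    · by_cases hxt : x < t <;> simp [hxs, hxt, not_lt.1 hxs]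
  rw [jumpPart, jumpPart, add_sub_add_comm, ← (hc.indicator _).tsum_sub (hc.indicator _),
    ← (hd.indicator _).tsum_sub (hd.indicator _), tsum_congr hIoc, tsum_congr hIco]

theorem monotone_jumpPart (hc : Summable c) (hd : Summable d) (hc₀ : 0 ≤ c) (hd₀ : 0 ≤ d) :
    Monotone (jumpPart c d) := fun s t hst => sub_nonneg.1 <| by
  rw [jumpPart_sub hc hd hst]
  exact add_nonneg (tsum_nonneg fun x => indicator_nonneg (fun y _ => hc₀ y) x)
    (tsum_nonneg fun x => indicator_nonneg (fun y _ => hd₀ y) x)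

theorem dist_jumpPart_le (hc : Summable c) (hd : Summable d) (s t : ℝ) :
    dist (jumpPart c d s) (jumpPart c d t)
      ≤ dist (jumpPart (|c ·|) (|d ·|) s) (jumpPart (|c ·|) (|d ·|) t) := by
  wlog hst : s ≤ t generalizing s t
  · rw [dist_comm, dist_comm (jumpPart _ _ s)]
    exact this t s (le_of_not_ge hst)
  have hmono := monotone_jumpPart hc.abs hd.abs (fun x => abs_nonneg (c x))
    (fun x => abs_nonneg (d x)) hst
  rw [dist_comm, dist_comm (jumpPart _ _ s), Real.dist_eq, Real.dist_eq,
    abs_of_nonneg (sub_nonneg.2 hmono), jumpPart_sub hc hd hst, jumpPart_sub hc.abs hd.abs hst]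
  exact (abs_add_le _ _).trans
    (add_le_add (abs_tsum_indicator_le hc _) (abs_tsum_indicator_le hd _))

end JumpPart

theorem mul_deltaMinus (c : ℝ → ℝ) (x t : ℝ) :
    c x * deltaMinus x t = (Iic t).indicator c x := by
  by_cases hxt : x ≤ t <;> simp [deltaMinus, hxt]

theorem mul_deltaPlus (c : ℝ → ℝ) (x t : ℝ) :
    c x * deltaPlus x t = (Iio t).indicator c x := by
  by_cases hxt : x < t <;> simp [deltaPlus, hxt]

namespace IsUseful

variable {F f um up : ℝ → ℝ}

theorem apply_eq_add_jumpPart (h : IsUseful F f um up) (t : ℝ) :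
    F t = f t + jumpPart um up t := by
  simp only [h.decomp t, add_assoc, jumpPart, mul_deltaMinus, mul_deltaPlus]

theorem tendsto_nhdsLT (h : IsUseful F f um up) (a : ℝ) :
    Tendsto F (𝓝[<] a) (𝓝 (F a - um a)) := by
  have hlim := (h.cont.continuousWithinAt (s := Iio a) (x := a)).tendsto.add
    (tendsto_jumpPart_nhdsLT (summable_abs_iff.1 h.summable_um)
      (summable_abs_iff.1 h.summable_up) a)
  rw [h.apply_eq_add_jumpPart a, add_sub_assoc]
  exact hlim.congr fun t => (h.apply_eq_add_jumpPart t).symm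

theorem tendsto_nhdsGT (h : IsUseful F f um up) (a : ℝ) :
    Tendsto F (𝓝[>] a) (𝓝 (F a + up a)) := by
  have hlim := (h.cont.continuousWithinAt (s := Ioi a) (x := a)).tendsto.add
    (tendsto_jumpPart_nhdsGT (summable_abs_iff.1 h.summable_um)
      (summable_abs_iff.1 h.summable_up) a)
  rw [h.apply_eq_add_jumpPart a, add_assoc]
  exact hlim.congr fun t => (h.apply_eq_add_jumpPart t).symm

theorem locallyBoundedVariationOn (h : IsUseful F f um up) :
    LocallyBoundedVariationOn F univ := by
  have hc := summable_abs_iff.1 h.summable_um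
  have hd := summable_abs_iff.1 h.summable_up
  have hK : LocallyBoundedVariationOn (jumpPart (|um ·|) (|up ·|)) univ :=
    ((monotone_jumpPart h.summable_um h.summable_up (fun x => abs_nonneg (um x))
      (fun x => abs_nonneg (up x))).monotoneOn _).locallyBoundedVariationOn
  intro s t _ _
  refine ne_top_of_le_ne_top
    (ENNReal.add_ne_top.2 ⟨h.bddVar.mono (subset_univ _), hK s t trivial trivial⟩)
    (eVariationOn_le_add_of_edist_le fun x _ y _ => ?_)
  rw [edist_dist, edist_dist, edist_dist, ← ENNReal.ofReal_add dist_nonneg dist_nonneg,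
    h.apply_eq_add_jumpPart x, h.apply_eq_add_jumpPart y]
  exact ENNReal.ofReal_le_ofReal ((dist_add_add_le _ _ _ _).trans
    (add_le_add le_rfl (dist_jumpPart_le hc hd x y)))

end IsUseful

/-- The local variation of a useful function `F` at `a` is `|u_a⁻| + |u_a⁺|`. -/
theorem useful_local_variation (F f um up : ℝ → ℝ) (h : IsUseful F f um up) (a : ℝ) :
    Tendsto (fun δ : ℝ => eVariationOn F (Set.Ioo (a - δ) (a + δ)))
      (nhdsWithin 0 (Set.Ioi 0)) (nhds (ENNReal.ofReal (|um a| + |up a|))) := by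
  convert h.locallyBoundedVariationOn.tendsto_eVariationOn_Ioo_sub_add (h.tendsto_nhdsLT a)
    (h.tendsto_nhdsGT a) using 2
  rw [edist_dist, edist_dist, Real.dist_eq, Real.dist_eq, sub_sub_cancel, sub_add_cancel_left,
    abs_neg, ENNReal.ofReal_add (abs_nonneg _) (abs_nonneg _)]

end
end

section
/- A point z ∈ (−∞,s) lies in the interior of some island in K = [−∞,s) if and only if there exists y ∈ (z,s) such that R(z) < R(y). -/
/-!
Islands (Section 3.3 of the paper).  `R` is a useful function with `max R(x) = R(x)` for all
`x`, `s ∈ ℝ`, and `R(-∞) = Rinf` is a fixed value with `R(z) ≤ Rinf` for all `z < s`.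
A (red) island in `K = [-∞, s)` is an open interval `(x, y) ⊆ K` (with `x = -∞` allowed,
encoded by `⊥ : EReal`) as in the definition below.  Lemma 3.4 of the paper:  `z ∈ (-∞, s)`
lies in the interior of an island iff `R(z) < R(y)` for some `y ∈ (z, s)`.
-/

noncomputable section

open Filter Topology

/-- `max R (x) = R x` for every `x`, i.e. both one-sided limits are `≤ R x`. -/
def MaxEqSelf (R : ℝ → ℝ) : Prop :=
  ∀ a : ℝ, Function.leftLim R a ≤ R a ∧ Function.rightLim R a ≤ R a

/-- The value of `R` at a point of `[-∞, ∞)`, where `R(-∞) = Rinf`. -/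
def Rval (R : ℝ → ℝ) (Rinf : ℝ) (x : EReal) : ℝ :=
  if x = ⊥ then Rinf else R x.toReal

/-- `(x, y)` is a (red) island in `K = [-∞, s)`:  either
(i) `y = s`, `R(x) ≥ R₋(s)` and `R(z) < R₋(s)` for all `z ∈ (x, s)`; or
(ii) `y < s`, `R(x) ≥ R(y) ≥ R₋(s)`, `R(z) < R(y)` for all `z ∈ (x, y)`, and
`R(w) ≤ R(y)` for all `w ∈ (y, s)`. -/
def IsIsland (R : ℝ → ℝ) (Rinf s : ℝ) (x y : EReal) : Prop :=
  x < y ∧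
  ((y = (s : EReal) ∧ Function.leftLim R s ≤ Rval R Rinf x ∧
      ∀ z : ℝ, x < (z : EReal) → z < s → R z < Function.leftLim R s) ∨
   (∃ yr : ℝ, y = (yr : EReal) ∧ yr < s ∧
      R yr ≤ Rval R Rinf x ∧ Function.leftLim R s ≤ R yr ∧
      (∀ z : ℝ, x < (z : EReal) → (z : EReal) < y → R z < R yr) ∧
      (∀ w : ℝ, yr < w → w < s → R w ≤ R yr)))

/-!
Write `B` for the supremum of `R` on `(z, s)`; it is finite since `R ≤ R(-∞)` there.  A useful
function with `max R = R` is upper semicontinuous, so its superlevel sets are closed and it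
attains its maximum on compact intervals.  Hence the left end of the island is the last point
`x ≤ z` with `R(x) ≥ B` (or `-∞` if there is none).  If `B` is attained on `(z, s)`, the first
point `y > z` where it is attained is the right end; otherwise compactness shows that `B`
can only be approached near `s`, so `B = R₋(s)` and the island is `(x, s)`.
-/

open Set Function

section JumpFunctions

variable {ι : Type*} {u : ι → ℝ} {g : ι → ℝ → ℝ}

theorem summable_mul_of_le_one (hu : Summable u) (hu0 : ∀ i, 0 ≤ u i) (hg0 : ∀ i t, 0 ≤ g i t)
    (hg1 : ∀ i t, g i t ≤ 1) (t : ℝ) : Summable fun i => u i * g i t :=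
  hu.of_nonneg_of_le (fun i => mul_nonneg (hu0 i) (hg0 i t))
    fun i => mul_le_of_le_one_right (hu0 i) (hg1 i t)

theorem monotone_tsum_mul (hu : Summable u) (hu0 : ∀ i, 0 ≤ u i) (hg0 : ∀ i t, 0 ≤ g i t)
    (hg1 : ∀ i t, g i t ≤ 1) (hg : ∀ i, Monotone (g i)) :
    Monotone fun t => ∑' i, u i * g i t := fun a b hab =>
  (summable_mul_of_le_one hu hu0 hg0 hg1 a).tsum_le_tsum
    (fun i => mul_le_mul_of_nonneg_left (hg i hab) (hu0 i))
    (summable_mul_of_le_one hu hu0 hg0 hg1 b)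

/-- The decomposition `u = |u| - (|u| - u)` into nonnegative coefficients. -/
theorem exists_monotone_sub_eq_tsum_mul (hu : Summable fun i => |u i|) (hg0 : ∀ i t, 0 ≤ g i t)
    (hg1 : ∀ i t, g i t ≤ 1) (hg : ∀ i, Monotone (g i)) :
    ∃ P Q : ℝ → ℝ, Monotone P ∧ Monotone Q ∧ (fun t => ∑' i, u i * g i t) = P - Q := by
  have habs0 : ∀ i, 0 ≤ |u i| := fun i => abs_nonneg _
  have hsub : Summable fun i => |u i| - u i := hu.sub hu.of_abs
  have hsub0 : ∀ i, 0 ≤ |u i| - u i := fun i => sub_nonneg.2 (le_abs_self _)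
  refine ⟨fun t => ∑' i, |u i| * g i t, fun t => ∑' i, (|u i| - u i) * g i t,
    monotone_tsum_mul hu habs0 hg0 hg1 hg, monotone_tsum_mul hsub hsub0 hg0 hg1 hg,
    funext fun t => ?_⟩
  rw [Pi.sub_apply, ← (summable_mul_of_le_one hu habs0 hg0 hg1 t).tsum_sub
    (summable_mul_of_le_one hsub hsub0 hg0 hg1 t)]
  congr 1 with i
  ring

end JumpFunctions

theorem deltaMinus_nonneg (x t : ℝ) : 0 ≤ deltaMinus x t :=
  indicator_nonneg (fun _ _ => zero_le_one) t

theorem deltaMinus_le_one (x t : ℝ) : deltaMinus x t ≤ 1 :=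
  indicator_apply_le' (fun _ => le_rfl) (fun _ => zero_le_one)

theorem monotone_deltaMinus (x : ℝ) : Monotone (deltaMinus x) := by
  intro a b hab
  by_cases ha : a ∈ Ici x
  · simp [deltaMinus, ha, mem_Ici.2 (le_trans ha hab)]
  · simpa [deltaMinus, ha] using deltaMinus_nonneg x b

theorem deltaPlus_nonneg (x t : ℝ) : 0 ≤ deltaPlus x t :=
  indicator_nonneg (fun _ _ => zero_le_one) t

theorem deltaPlus_le_one (x t : ℝ) : deltaPlus x t ≤ 1 :=
  indicator_apply_le' (fun _ => le_rfl) (fun _ => zero_le_one)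

theorem monotone_deltaPlus (x : ℝ) : Monotone (deltaPlus x) := by
  intro a b hab
  by_cases ha : a ∈ Ioi x
  · simp [deltaPlus, ha, mem_Ioi.2 (lt_of_lt_of_le ha hab)]
  · simpa [deltaPlus, ha] using deltaPlus_nonneg x b

theorem upperSemicontinuous_of_tendsto_leftLim_rightLim {α β : Type*} [LinearOrder α]
    [TopologicalSpace α] [LinearOrder β] [TopologicalSpace β] [OrderTopology β] {f : α → β}
    (hl : ∀ a, Tendsto f (𝓝[<] a) (𝓝 (leftLim f a)))
    (hr : ∀ a, Tendsto f (𝓝[>] a) (𝓝 (rightLim f a)))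
    (hle : ∀ a, leftLim f a ≤ f a ∧ rightLim f a ≤ f a) : UpperSemicontinuous f := by
  intro a c hc
  rw [← nhdsNE_sup_pure, ← nhdsLT_sup_nhdsGT, eventually_sup, eventually_sup, eventually_pure]
  exact ⟨⟨(hl a).eventually_lt_const ((hle a).1.trans_lt hc),
    (hr a).eventually_lt_const ((hle a).2.trans_lt hc)⟩, hc⟩

section Semicontinuity

variable {α β : Type*} [ConditionallyCompleteLinearOrder α] [TopologicalSpace α] [OrderTopology α]
  [LinearOrder β] {f : α → β} {a b : α} {c : β}

theorem UpperSemicontinuous.exists_ge_forall_Ioc_lt (hf : UpperSemicontinuous f) (hb : f b < c)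
    (hab : a ≤ b) (ha : c ≤ f a) : ∃ x ∈ Ico a b, c ≤ f x ∧ ∀ y ∈ Ioc x b, f y < c := by
  set S := Icc a b ∩ f ⁻¹' Ici c
  have hS : BddAbove S := bddAbove_Icc.mono inter_subset_left
  have hmem : sSup S ∈ S :=
    (isClosed_Icc.inter (hf.isClosed_preimage c)).csSup_mem ⟨a, ⟨le_rfl, hab⟩, ha⟩ hS
  refine ⟨sSup S, ⟨hmem.1.1, hmem.1.2.lt_of_ne fun h => ?_⟩, hmem.2, fun y hy => ?_⟩
  · exact hb.not_ge (h ▸ hmem.2)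
  · by_contra! hcy
    exact hy.1.not_ge (le_csSup hS ⟨⟨hmem.1.1.trans hy.1.le, hy.2⟩, hcy⟩)

theorem UpperSemicontinuous.exists_ge_forall_Ico_lt (hf : UpperSemicontinuous f) (ha : f a < c)
    (hab : a ≤ b) (hb : c ≤ f b) : ∃ y ∈ Ioc a b, c ≤ f y ∧ ∀ x ∈ Ico a y, f x < c := by
  obtain ⟨y, hy, hcy, hlt⟩ :=
    UpperSemicontinuous.exists_ge_forall_Ioc_lt (α := αᵒᵈ) hf ha hab hb
  exact ⟨y, ⟨hy.2, hy.1⟩, hcy, fun x hx => hlt x ⟨hx.2, hx.1⟩⟩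

theorem UpperSemicontinuous.exists_lt_forall_Ico_le [TopologicalSpace β] [OrderTopology β]
    [DenselyOrdered β] {L : β} (hf : UpperSemicontinuous f) (hL : Tendsto f (𝓝[<] b) (𝓝 L))
    (hLc : L < c) (hab : a < b) (hlt : ∀ x ∈ Ico a b, f x < c) :
    ∃ d < c, ∀ x ∈ Ico a b, f x ≤ d := by
  obtain ⟨m, hLm, hmc⟩ := exists_between hLc
  obtain ⟨t, ht, hsub⟩ :=
    (mem_nhdsLT_iff_exists_mem_Ico_Ioo_subset hab).1 (hL.eventually_lt_const hLm)
  obtain ⟨x₀, hx₀, hmax⟩ :=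
    (hf.upperSemicontinuousOn _).exists_isMaxOn (nonempty_Icc.2 ht.1) isCompact_Icc
  refine ⟨max m (f x₀), max_lt hmc (hlt x₀ ⟨hx₀.1, hx₀.2.trans_lt ht.2⟩), fun x hx => ?_⟩
  rcases le_or_gt x t with hxt | htx
  · exact le_max_of_le_right (hmax ⟨hx.1, hxt⟩)
  · exact le_max_of_le_left (hsub ⟨htx, hx.2⟩).le

end Semicontinuity

namespace IsUseful

variable {R f um up : ℝ → ℝ}

theorem exists_monotone_sub (h : IsUseful R f um up) :
    ∃ P Q : ℝ → ℝ, Monotone P ∧ Monotone Q ∧ R = f + (P - Q) := by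
  obtain ⟨P₁, Q₁, hP₁, hQ₁, e₁⟩ := exists_monotone_sub_eq_tsum_mul h.summable_um
    deltaMinus_nonneg deltaMinus_le_one monotone_deltaMinus
  obtain ⟨P₂, Q₂, hP₂, hQ₂, e₂⟩ := exists_monotone_sub_eq_tsum_mul h.summable_up
    deltaPlus_nonneg deltaPlus_le_one monotone_deltaPlus
  refine ⟨P₁ + P₂, Q₁ + Q₂, hP₁.add hP₂, hQ₁.add hQ₂, funext fun t => ?_⟩
  rw [h.decomp t, congrFun e₁ t, congrFun e₂ t]
  simp only [Pi.add_apply, Pi.sub_apply]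
  ring

theorem tendsto_leftLim (h : IsUseful R f um up) (a : ℝ) :
    Tendsto R (𝓝[<] a) (𝓝 (leftLim R a)) := by
  obtain ⟨P, Q, hP, hQ, rfl⟩ := h.exists_monotone_sub
  exact tendsto_leftLim_of_tendsto ⟨_, ((h.cont.tendsto a).mono_left nhdsWithin_le_nhds).add
    ((hP.tendsto_leftLim a).sub (hQ.tendsto_leftLim a))⟩

theorem tendsto_rightLim (h : IsUseful R f um up) (a : ℝ) :
    Tendsto R (𝓝[>] a) (𝓝 (rightLim R a)) := by
  obtain ⟨P, Q, hP, hQ, rfl⟩ := h.exists_monotone_sub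
  exact tendsto_rightLim_of_tendsto ⟨_, ((h.cont.tendsto a).mono_left nhdsWithin_le_nhds).add
    ((hP.tendsto_rightLim a).sub (hQ.tendsto_rightLim a))⟩

theorem upperSemicontinuous (h : IsUseful R f um up) (hmax : MaxEqSelf R) :
    UpperSemicontinuous R :=
  upperSemicontinuous_of_tendsto_leftLim_rightLim h.tendsto_leftLim h.tendsto_rightLim hmax

end IsUseful

section Islands

variable {R : ℝ → ℝ} {Rinf s : ℝ}

@[simp]
theorem Rval_bot : Rval R Rinf ⊥ = Rinf := if_pos rfl

@[simp]
theorem Rval_coe (x : ℝ) : Rval R Rinf x = R x := by simp [Rval]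

theorem IsIsland.exists_lt_of_mem {x y : EReal} {z : ℝ} (hI : IsIsland R Rinf s x y)
    (hR : Tendsto R (𝓝[<] s) (𝓝 (leftLim R s))) (hxz : x < z) (hzy : (z : EReal) < y) :
    ∃ w, z < w ∧ w < s ∧ R z < R w := by
  obtain ⟨-, ⟨rfl, -, hlt⟩ | ⟨y, rfl, hys, -, -, hlt, -⟩⟩ := hI
  · have hzs : z < s := EReal.coe_lt_coe_iff.1 hzy
    obtain ⟨w, hRw, hw⟩ :=
      ((hR.eventually_const_lt (hlt z hxz hzs)).and (Ioo_mem_nhdsLT hzs)).exists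
    exact ⟨w, hw.1, hw.2, hRw⟩
  · exact ⟨y, EReal.coe_lt_coe_iff.1 hzy, hys, hlt z hxz hzy⟩

theorem exists_island_left_end (hR : UpperSemicontinuous R) {z B : ℝ} (hzB : R z < B)
    (hB : B ≤ Rinf) :
    ∃ x : EReal, x < z ∧ B ≤ Rval R Rinf x ∧ ∀ w : ℝ, x < w → w ≤ z → R w < B := by
  by_cases hA : ∃ a ≤ z, B ≤ R a
  · obtain ⟨a, haz, hBa⟩ := hA
    obtain ⟨x, hx, hBx, hlt⟩ := hR.exists_ge_forall_Ioc_lt hzB haz hBa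
    exact ⟨x, EReal.coe_lt_coe_iff.2 hx.2, by simpa using hBx,
      fun w hxw hwz => hlt w ⟨EReal.coe_lt_coe_iff.1 hxw, hwz⟩⟩
  · push Not at hA
    exact ⟨⊥, EReal.bot_lt_coe z, by simpa using hB, fun w _ hwz => hA w hwz⟩

theorem exists_isIsland_of_lt (hR : UpperSemicontinuous R)
    (hL : Tendsto R (𝓝[<] s) (𝓝 (leftLim R s))) (hRinf : ∀ w, w < s → R w ≤ Rinf)
    {z y : ℝ} (hzy : z < y) (hys : y < s) (hRzy : R z < R y) :
    ∃ a b : EReal, IsIsland R Rinf s a b ∧ a < z ∧ (z : EReal) < b := by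
  have hzs : z < s := hzy.trans hys
  set B := sSup (R '' Ioo z s)
  have hne : (R '' Ioo z s).Nonempty := (nonempty_Ioo.2 hzs).image R
  have hle : ∀ w ∈ Ioo z s, R w ≤ B := fun w hw =>
    le_csSup ⟨Rinf, forall_mem_image.2 fun w hw => hRinf w hw.2⟩ (mem_image_of_mem R hw)
  have hzB : R z < B := hRzy.trans_le (hle y ⟨hzy, hys⟩)
  have hLB : leftLim R s ≤ B := le_of_tendsto hL (mem_of_superset (Ioo_mem_nhdsLT hzs) hle)
  obtain ⟨x, hxz, hBx, hxlt⟩ := exists_island_left_end hR hzB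
    (csSup_le hne (forall_mem_image.2 fun w hw => hRinf w hw.2))
  by_cases hatt : ∃ w ∈ Ioo z s, B ≤ R w
  · obtain ⟨w, hw, hBw⟩ := hatt
    obtain ⟨Y, hY, hBY, hYlt⟩ := hR.exists_ge_forall_Ico_lt hzB hw.1.le hBw
    have hYs : Y < s := hY.2.trans_lt hw.2
    have hRY : R Y = B := (hle Y ⟨hY.1, hYs⟩).antisymm hBY
    refine ⟨x, Y, ⟨hxz.trans (EReal.coe_lt_coe_iff.2 hY.1), Or.inr ⟨Y, rfl, hYs, hRY ▸ hBx,
      hRY ▸ hLB, fun v hxv hvY => ?_, fun v hYv hvs => hRY ▸ hle v ⟨hY.1.trans hYv, hvs⟩⟩⟩,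
      hxz, EReal.coe_lt_coe_iff.2 hY.1⟩
    rcases le_or_gt v z with hvz | hzv
    · exact hRY ▸ hxlt v hxv hvz
    · exact hRY ▸ hYlt v ⟨hzv.le, EReal.coe_lt_coe_iff.1 hvY⟩
  · push Not at hatt
    have hBL : B ≤ leftLim R s := by
      by_contra! hLB'
      obtain ⟨d, hdB, hd⟩ := hR.exists_lt_forall_Ico_le hL hLB' hzs fun w hw =>
        hw.1.eq_or_lt.elim (fun hzw => hzw ▸ hzB) fun hzw => hatt w ⟨hzw, hw.2⟩
      exact hdB.not_ge (csSup_le hne (forall_mem_image.2 fun w hw => hd w ⟨hw.1.le, hw.2⟩))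
    refine ⟨x, s, ⟨hxz.trans (EReal.coe_lt_coe_iff.2 hzs), Or.inl ⟨rfl, hLB.trans hBx,
      fun v hxv hvs => ?_⟩⟩, hxz, EReal.coe_lt_coe_iff.2 hzs⟩
    rcases le_or_gt v z with hvz | hzv
    · exact (hxlt v hxv hvz).trans_le hBL
    · exact (hatt v ⟨hzv, hvs⟩).trans_le hBL

end Islands

theorem mem_island_iff_general (R f um up : ℝ → ℝ) (h : IsUseful R f um up)
    (hmax : MaxEqSelf R) (s Rinf : ℝ) (hRinf : ∀ z : ℝ, z < s → R z ≤ Rinf)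
    (z : ℝ) :
    (∃ x y : EReal, IsIsland R Rinf s x y ∧ x < (z : EReal) ∧ (z : EReal) < y) ↔
      ∃ y : ℝ, z < y ∧ y < s ∧ R z < R y := by
  constructor
  · rintro ⟨x, y, hI, hxz, hzy⟩
    exact hI.exists_lt_of_mem (h.tendsto_leftLim s) hxz hzy
  · rintro ⟨y, hzy, hys, hRzy⟩
    exact exists_isIsland_of_lt (h.upperSemicontinuous hmax) (h.tendsto_leftLim s) hRinf hzy hys
      hRzy

/-- Lemma 3.4:  `z ∈ (-∞, s)` lies in the interior of some island in `K = [-∞, s)`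
iff there is `y ∈ (z, s)` with `R(z) < R(y)`. -/
theorem mem_island_iff (R f um up : ℝ → ℝ) (h : IsUseful R f um up)
    (hmax : MaxEqSelf R) (s Rinf : ℝ) (hRinf : ∀ z : ℝ, z < s → R z ≤ Rinf)
    (z : ℝ) (hz : z < s) :
    (∃ x y : EReal, IsIsland R Rinf s x y ∧ x < (z : EReal) ∧ (z : EReal) < y) ↔
      ∃ y : ℝ, z < y ∧ y < s ∧ R z < R y :=
  mem_island_iff_general R f um up h hmax s Rinf hRinf z

end
end

section
/- Let (L,𝓜) be a measured lamination of the hyperbolic plane 𝔥² and let K ⊆ L be either a singleton {γ} with γ a discrete arc, a fountain, or a rainbow. Then 𝓜(K) > 0. -/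
/-!
Laminations of the hyperbolic plane `𝔥²`.  The boundary circle of the Poincaré disk is
identified with `ℝ ∪ {-∞}` (the point `⊥ = -∞` being the "wrap point" of the circle);
a geodesic is encoded as an ordered pair `(a, b)` of boundary points with `a < b`.
-/

noncomputable section

open Filter Topology MeasureTheory

/-- The boundary circle of the Poincaré disk, identified with `ℝ ∪ {-∞}`. -/
abbrev Boundary : Type := WithBot ℝ

/-- Open arcs of the boundary circle (arcs may wrap around the point `⊥ = -∞`). -/
def IsArc (S : Set Boundary) : Prop :=
  S = ∅ ∨ S = Set.univ ∨
  (∃ a b : Boundary, S = {x | a < x ∧ x < b}) ∨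
  (∃ a : Boundary, S = {x | a < x}) ∨
  (∃ a b : Boundary, S = {x | a < x ∨ x < b})

/-- The geodesics `{a,b}` (`a < b`) and `{c,d}` (`c < d`) cross iff `a < c < b < d` or
`c < a < d < b`. -/
def Cross (γ δ : Boundary × Boundary) : Prop :=
  (γ.1 < δ.1 ∧ δ.1 < γ.2 ∧ γ.2 < δ.2) ∨ (δ.1 < γ.1 ∧ γ.1 < δ.2 ∧ δ.2 < γ.2)

/-- A lamination is a maximal set of pairwise noncrossing geodesics. -/
def IsLamination (L : Set (Boundary × Boundary)) : Prop :=
  (∀ γ ∈ L, γ.1 < γ.2) ∧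
  (∀ γ ∈ L, ∀ δ ∈ L, ¬ Cross γ δ) ∧
  (∀ p : Boundary × Boundary, p.1 < p.2 → (∀ γ ∈ L, ¬ Cross p γ) → p ∈ L)

/-- The basic (open) set `O_{A,B}`:  geodesics with one endpoint in `A` and the other
in `B`. -/
def OArc (A B : Set Boundary) : Set (Boundary × Boundary) :=
  {p | (p.1 ∈ A ∧ p.2 ∈ B) ∨ (p.1 ∈ B ∧ p.2 ∈ A)}

/-- The σ-algebra generated by the basic sets `O_{A,B}`. -/
instance : MeasurableSpace (Boundary × Boundary) :=
  MeasurableSpace.generateFrom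
    {S | ∃ A B : Set Boundary, IsArc A ∧ IsArc B ∧ S = OArc A B}

/-- A measured lamination:  a lamination `L` together with a measure, supported on `L`,
with `0 < 𝓜(O_{A,B}) < ∞` for every nonempty basic subset `O_{A,B}` of `L`. -/
structure MeasuredLamination where
  L : Set (Boundary × Boundary)
  μ : Measure (Boundary × Boundary)
  lam : IsLamination L
  supp : μ Lᶜ = 0
  pos : ∀ A B : Set Boundary, IsArc A → IsArc B → (OArc A B ∩ L).Nonempty →
    0 < μ (OArc A B ∩ L) ∧ μ (OArc A B ∩ L) < ⊤

/-- `L/x`:  the geodesics of `L` strictly spanning the boundary point `x`. -/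
def Ldiv (L : Set (Boundary × Boundary)) (x : Boundary) : Set (Boundary × Boundary) :=
  {γ ∈ L | γ.1 < x ∧ x < γ.2}

/-- `L·x`:  the geodesics of `L` with larger endpoint `x`. -/
def Lend (L : Set (Boundary × Boundary)) (x : Boundary) : Set (Boundary × Boundary) :=
  {γ ∈ L | γ.2 = x}

/-- `x·L`:  the geodesics of `L` with smaller endpoint `x`. -/
def Lstart (L : Set (Boundary × Boundary)) (x : Boundary) : Set (Boundary × Boundary) :=
  {γ ∈ L | γ.1 = x}

/-- `γ` is a discrete arc of `L`:  there are disjoint open arcs `A ∋ a`, `B ∋ b` with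
`O_{A,B} = {γ}`. -/
def IsDiscreteArc (L : Set (Boundary × Boundary)) (γ : Boundary × Boundary) : Prop :=
  γ ∈ L ∧ ∃ A B : Set Boundary, IsArc A ∧ IsArc B ∧ A ∩ B = ∅ ∧
    γ.1 ∈ A ∧ γ.2 ∈ B ∧ OArc A B ∩ L = {γ}

/-- Interval subsets of the boundary circle:  between any two of its points, the set
contains one of the two open arcs joining them. -/
def CircInterval (S : Set Boundary) : Prop :=
  ∀ x ∈ S, ∀ z ∈ S, x < z → ({y | x < y ∧ y < z} ⊆ S ∨ {y | y < x ∨ z < y} ⊆ S)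

/-- The boundary `∂A` of a subset of the circle (w.r.t. the arc topology). -/
def ArcBoundary (A : Set Boundary) : Set Boundary :=
  {x | ∀ U : Set Boundary, IsArc U → x ∈ U → (U ∩ A).Nonempty ∧ (U ∩ Aᶜ).Nonempty}

/-- `K` is a fountain of `L`:  there is a boundary point `a` and an interval `A` with more
than one point such that every geodesic of `L` with an endpoint in `A` has its other
endpoint equal to `a`, and `K` is the set of geodesics of `L` with one endpoint `a` and
the other in `A`; we require `K` to have more than one element. -/
def IsFountain (L K : Set (Boundary × Boundary)) : Prop :=
  ∃ (a : Boundary) (A : Set Boundary), CircInterval A ∧ A.Nontrivial ∧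
    (∀ γ ∈ L, (γ.1 ∈ A → γ.2 = a) ∧ (γ.2 ∈ A → γ.1 = a)) ∧
    K = {γ ∈ L | (γ.1 = a ∧ γ.2 ∈ A) ∨ (γ.2 = a ∧ γ.1 ∈ A)} ∧ K.Nontrivial

/-- `K` is a rainbow of `L`:  there are intervals `A`, `B` meeting in at most one point,
such that every geodesic of `L` has one endpoint in `A ∖ ∂A` iff its other endpoint is in
`B ∖ ∂B`, and `K` is the (at least two element) set of geodesics of `L` with one endpoint
in `A` and the other in `B`. -/
def IsRainbow (L K : Set (Boundary × Boundary)) : Prop :=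
  ∃ A B : Set Boundary, CircInterval A ∧ CircInterval B ∧ (A ∩ B).Subsingleton ∧
    (∀ γ ∈ L, (γ.1 ∈ A \ ArcBoundary A ↔ γ.2 ∈ B \ ArcBoundary B) ∧
              (γ.2 ∈ A \ ArcBoundary A ↔ γ.1 ∈ B \ ArcBoundary B)) ∧
    K = {γ ∈ L | (γ.1 ∈ A ∧ γ.2 ∈ B) ∨ (γ.1 ∈ B ∧ γ.2 ∈ A)} ∧ K.Nontrivial


section AuxProof

lemma isArc_univ' : IsArc (Set.univ : Set Boundary) := Or.inr (Or.inl rfl)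

lemma cross_endpoint' {I : Set Boundary} (hI : IsArc I) {u u' c d : Boundary}
    (hu : u ∈ I) (hu' : u' ∈ I) (h : Cross (u, u') (c, d)) : c ∈ I ∨ d ∈ I := by
  rcases hI with rfl | rfl | ⟨a, b, rfl⟩ | ⟨a, rfl⟩ | ⟨a, b, rfl⟩
  · exact absurd hu (Set.notMem_empty u)
  · exact Or.inl trivial
  · rcases h with ⟨h1, h2, h3⟩ | ⟨h1, h2, h3⟩
    · exact Or.inl ⟨hu.1.trans h1, h2.trans hu'.2⟩
    · exact Or.inr ⟨hu.1.trans h2, h3.trans hu'.2⟩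
  · rcases h with ⟨h1, h2, h3⟩ | ⟨h1, h2, h3⟩
    · exact Or.inl (hu.trans h1)
    · exact Or.inr (hu.trans h2)
  · rcases h with ⟨h1, h2, h3⟩ | ⟨h1, h2, h3⟩
    · rcases hu' with hu' | hu'
      · exact Or.inr (Or.inl (hu'.trans h3))
      · exact Or.inl (Or.inr (h2.trans hu'))
    · rcases hu with hu | hu
      · exact Or.inr (Or.inl (hu.trans h2))
      · exact Or.inl (Or.inr (h1.trans hu))

lemma exists_endpoint' {L : Set (Boundary × Boundary)} (hL : IsLamination L)
    {I : Set Boundary} (hI : IsArc I) {u u' : Boundary}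
    (hu : u ∈ I) (hu' : u' ∈ I) (huu : u < u') :
    ∃ η ∈ L, η.1 ∈ I ∨ η.2 ∈ I := by
  by_contra h
  push_neg at h
  have hmem : (u, u') ∈ L := by
    refine hL.2.2 (u, u') huu ?_
    rintro ⟨c, d⟩ hγ hc
    rcases cross_endpoint' hI hu hu' hc with h' | h'
    · exact (h _ hγ).1 h'
    · exact (h _ hγ).2 h'
  exact (h _ hmem).1 hu

lemma between_arc' {A : Set Boundary} (hA : CircInterval A) {x y : Boundary}
    (hx : x ∈ A) (hy : y ∈ A) (hxy : x < y) :
    ∃ I : Set Boundary, IsArc I ∧ I ⊆ A ∧ ∃ u ∈ I, ∃ u' ∈ I, u < u' := by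
  rcases hA x hx y hy hxy with h | h
  · obtain ⟨w, hw1, hw2⟩ := exists_between hxy
    obtain ⟨w', hw'1, hw'2⟩ := exists_between hw1
    exact ⟨_, Or.inr (Or.inr (Or.inl ⟨x, y, rfl⟩)), h,
      w', ⟨hw'1, hw'2.trans hw2⟩, w, ⟨hw1, hw2⟩, hw'2⟩
  · obtain ⟨w, hw⟩ := exists_gt y
    obtain ⟨w', hw'⟩ := exists_gt w
    exact ⟨_, Or.inr (Or.inr (Or.inr (Or.inr ⟨y, x, Set.ext fun t => or_comm⟩))), h,
      w, Or.inr hw, w', Or.inr (hw.trans hw'), hw'⟩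

lemma subset_interior' {A I : Set Boundary} (hI : IsArc I) (hIA : I ⊆ A) :
    I ⊆ A \ ArcBoundary A := by
  intro t ht
  refine ⟨hIA ht, fun hb => ?_⟩
  obtain ⟨s, hs1, hs2⟩ := (hb I hI ht).2
  exact hs2 (hIA hs1)

lemma pos_of_subset' (M : MeasuredLamination) {K : Set (Boundary × Boundary)}
    {A B : Set Boundary} (hA : IsArc A) (hB : IsArc B)
    (hne : (OArc A B ∩ M.L).Nonempty) (hsub : OArc A B ∩ M.L ⊆ K) : 0 < M.μ K :=
  lt_of_lt_of_le (M.pos A B hA hB hne).1 (measure_mono hsub)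

/-- If every leaf with an endpoint in a fat subinterval `I` of `A` lies in `K`,
then `K` has positive measure. -/
lemma pos_of_absorbing' (M : MeasuredLamination) {K : Set (Boundary × Boundary)}
    {A : Set Boundary} (hA : CircInterval A) {x y : Boundary}
    (hx : x ∈ A) (hy : y ∈ A) (hxy : x < y)
    (habs : ∀ I : Set Boundary, IsArc I → I ⊆ A →
      ∀ τ ∈ M.L, (τ.1 ∈ I ∨ τ.2 ∈ I) → τ ∈ K) : 0 < M.μ K := by
  obtain ⟨I, hIarc, hIA, u, hu, u', hu', huu⟩ := between_arc' hA hx hy hxy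
  obtain ⟨η, hηL, hηI⟩ := exists_endpoint' M.lam hIarc hu hu' huu
  refine pos_of_subset' M hIarc isArc_univ' ⟨η, ?_, hηL⟩ ?_
  · rcases hηI with h | h
    · exact Or.inl ⟨h, trivial⟩
    · exact Or.inr ⟨trivial, h⟩
  · rintro τ ⟨hO, hτL⟩
    refine habs I hIarc hIA τ hτL ?_
    rcases hO with ⟨h1, _⟩ | ⟨_, h2⟩
    · exact Or.inl h1
    · exact Or.inr h2

end AuxProof

/-- Proposition 4.5:  discrete arcs, fountains and rainbows have positive measure. -/
theorem discrete_fountain_rainbow_pos (M : MeasuredLamination)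
    (K : Set (Boundary × Boundary))
    (hK : (∃ γ, K = {γ} ∧ IsDiscreteArc M.L γ) ∨ IsFountain M.L K ∨ IsRainbow M.L K) :
    0 < M.μ K := by
  rcases hK with ⟨γ, rfl, hγL, A, B, hA, hB, _, _, _, hO⟩ | hF | hR
  · -- discrete arc
    refine pos_of_subset' M hA hB ?_ ?_
    · rw [hO]; exact ⟨γ, rfl⟩
    · rw [hO]
  · -- fountain
    obtain ⟨a, A, hAint, _, hfount, hKdef, hKnt⟩ := hF
    obtain ⟨γ, hγK, δ, hδK, hγδ⟩ := hKnt
    have hend : ∀ τ ∈ K, τ ∈ M.L ∧ ∃ x ∈ A, τ = (a, x) ∨ τ = (x, a) := by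
      intro τ hτ
      rw [hKdef] at hτ
      obtain ⟨hτL, hτ⟩ := hτ
      refine ⟨hτL, ?_⟩
      rcases hτ with ⟨h1, h2⟩ | ⟨h1, h2⟩
      · exact ⟨τ.2, h2, Or.inl (by rw [← h1])⟩
      · exact ⟨τ.1, h2, Or.inr (by rw [← h1])⟩
    obtain ⟨hγL, x, hxA, hγx⟩ := hend γ hγK
    obtain ⟨hδL, y, hyA, hδy⟩ := hend δ hδK
    have hxy : x ≠ y := by
      rintro rfl
      rcases hγx with rfl | rfl <;> rcases hδy with rfl | rfl
      · exact hγδ rfl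
      · exact absurd (M.lam.1 _ hδL) (not_lt_of_gt (M.lam.1 _ hγL))
      · exact absurd (M.lam.1 _ hδL) (not_lt_of_gt (M.lam.1 _ hγL))
      · exact hγδ rfl
    have main : ∀ u ∈ A, ∀ v ∈ A, u < v → 0 < M.μ K := by
      intro u hu v hv huv
      refine pos_of_absorbing' M hAint hu hv huv ?_
      intro I _ hIA τ hτL hτ
      rw [hKdef]
      rcases hτ with h | h
      · exact ⟨hτL, Or.inr ⟨(hfount τ hτL).1 (hIA h), hIA h⟩⟩
      · exact ⟨hτL, Or.inl ⟨(hfount τ hτL).2 (hIA h), hIA h⟩⟩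
    rcases hxy.lt_or_gt with h | h
    · exact main x hxA y hyA h
    · exact main y hyA x hxA h
  · -- rainbow
    obtain ⟨A, B, hAint, hBint, _, hC, hKdef, hKnt⟩ := hR
    obtain ⟨γ, hγK, δ, hδK, hγδ⟩ := hKnt
    have hend : ∀ τ ∈ K, τ ∈ M.L ∧ ∃ x ∈ A, ∃ y ∈ B, τ = (x, y) ∨ τ = (y, x) := by
      intro τ hτ
      rw [hKdef] at hτ
      obtain ⟨hτL, hτ⟩ := hτ
      refine ⟨hτL, ?_⟩
      rcases hτ with ⟨h1, h2⟩ | ⟨h1, h2⟩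
      · exact ⟨τ.1, h1, τ.2, h2, Or.inl rfl⟩
      · exact ⟨τ.2, h2, τ.1, h1, Or.inr rfl⟩
    obtain ⟨hγL, x₁, hx₁, y₁, hy₁, hγe⟩ := hend γ hγK
    obtain ⟨hδL, x₂, hx₂, y₂, hy₂, hδe⟩ := hend δ hδK
    have mainA : ∀ u ∈ A, ∀ v ∈ A, u < v → 0 < M.μ K := by
      intro u hu v hv huv
      refine pos_of_absorbing' M hAint hu hv huv ?_
      intro I hIarc hIA τ hτL hτ
      rw [hKdef]
      rcases hτ with h | h
      · have h1 : τ.1 ∈ A \ ArcBoundary A := subset_interior' hIarc hIA h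
        have h2 := (hC τ hτL).1.mp h1
        exact ⟨hτL, Or.inl ⟨h1.1, h2.1⟩⟩
      · have h1 : τ.2 ∈ A \ ArcBoundary A := subset_interior' hIarc hIA h
        have h2 := (hC τ hτL).2.mp h1
        exact ⟨hτL, Or.inr ⟨h2.1, h1.1⟩⟩
    have mainB : ∀ u ∈ B, ∀ v ∈ B, u < v → 0 < M.μ K := by
      intro u hu v hv huv
      refine pos_of_absorbing' M hBint hu hv huv ?_
      intro I hIarc hIB τ hτL hτ
      rw [hKdef]
      rcases hτ with h | h
      · have h1 : τ.1 ∈ B \ ArcBoundary B := subset_interior' hIarc hIB h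
        have h2 := (hC τ hτL).2.mpr h1
        exact ⟨hτL, Or.inr ⟨h1.1, h2.1⟩⟩
      · have h1 : τ.2 ∈ B \ ArcBoundary B := subset_interior' hIarc hIB h
        have h2 := (hC τ hτL).1.mpr h1
        exact ⟨hτL, Or.inl ⟨h2.1, h1.1⟩⟩
    by_cases hx : x₁ = x₂
    · have hy : y₁ ≠ y₂ := by
        rintro rfl
        subst hx
        rcases hγe with rfl | rfl <;> rcases hδe with rfl | rfl
        · exact hγδ rfl
        · exact absurd (M.lam.1 _ hδL) (not_lt_of_gt (M.lam.1 _ hγL))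
        · exact absurd (M.lam.1 _ hδL) (not_lt_of_gt (M.lam.1 _ hγL))
        · exact hγδ rfl
      rcases hy.lt_or_gt with h | h
      · exact mainB y₁ hy₁ y₂ hy₂ h
      · exact mainB y₂ hy₂ y₁ hy₁ h
    · rcases (Ne.lt_or_gt hx) with h | h
      · exact mainA x₁ hx₁ x₂ hx₂ h
      · exact mainA x₂ hx₂ x₁ hx₁ h


end
end

section
/- Let (L,𝓜) be a measured lamination of 𝔥² and let a < b be points of the boundary ℝ∪{−∞} such that for every x ∈ (a,b) one has 𝓜(L/x) ≥ 𝓜(L/a) and 𝓜(L/x) ≥ 𝓜(L/b). Then the geodesic {a,b} belongs to L. -/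
/-!
Laminations of the hyperbolic plane `𝔥²`.  The boundary circle of the Poincaré disk is
identified with `ℝ ∪ {-∞}` (the point `⊥ = -∞` being the "wrap point" of the circle);
a geodesic is encoded as an ordered pair `(a, b)` of boundary points with `a < b`.
-/

noncomputable section

open Filter Topology MeasureTheory

namespace Lam410

/-- The "open" sets of arcs used below. -/
def Aoo (c d : Boundary) : Set Boundary := {x | c < x ∧ x < d}

def Aoi (c : Boundary) : Set Boundary := {x | c < x}

def Awrap (c d : Boundary) : Set Boundary := {x | c < x ∨ x < d}

lemma isArc_Aoo (c d : Boundary) : IsArc (Aoo c d) :=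
  Or.inr (Or.inr (Or.inl ⟨c, d, rfl⟩))

lemma isArc_Aoi (c : Boundary) : IsArc (Aoi c) :=
  Or.inr (Or.inr (Or.inr (Or.inl ⟨c, rfl⟩)))

lemma isArc_Awrap (c d : Boundary) : IsArc (Awrap c d) :=
  Or.inr (Or.inr (Or.inr (Or.inr ⟨c, d, rfl⟩)))

lemma isArc_univ : IsArc (Set.univ : Set Boundary) := Or.inr (Or.inl rfl)

lemma measurable_OArc {A B : Set Boundary} (hA : IsArc A) (hB : IsArc B) :
    MeasurableSet (OArc A B) :=
  MeasurableSpace.measurableSet_generateFrom ⟨A, B, hA, hB, rfl⟩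

/-- The (symmetric, measurable) set of pairs spanning the point `x`. -/
def Sp (x : Boundary) : Set (Boundary × Boundary) :=
  {p | (p.1 < x ∧ x < p.2) ∨ (p.2 < x ∧ x < p.1)}

lemma Sp_eq_iInter (x : Boundary) :
    Sp x = ⋂ n : ℕ, OArc (Awrap ((n : ℝ) : Boundary) x) (Aoi x) := by
  ext p
  simp only [Set.mem_iInter]
  constructor
  · rintro (⟨h1, h2⟩ | ⟨h1, h2⟩) n
    · exact Or.inl ⟨Or.inr h1, h2⟩
    · exact Or.inr ⟨h2, Or.inr h1⟩
  · intro hp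
    have hfin : ∀ z : Boundary, ∃ n : ℕ, z < ((n : ℝ) : Boundary) := by
      intro z
      induction z using WithBot.recBotCoe with
      | bot => exact ⟨0, WithBot.bot_lt_coe _⟩
      | coe r =>
        obtain ⟨n, hn⟩ := exists_nat_gt r
        exact ⟨n, WithBot.coe_lt_coe.2 hn⟩
    obtain ⟨n1, hn1⟩ := hfin p.1
    obtain ⟨n2, hn2⟩ := hfin p.2
    set n := max n1 n2 with hn
    have hpn1 : p.1 < ((n : ℝ) : Boundary) :=
      hn1.trans_le (WithBot.coe_le_coe.2 (by exact_mod_cast le_max_left n1 n2))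
    have hpn2 : p.2 < ((n : ℝ) : Boundary) :=
      hn2.trans_le (WithBot.coe_le_coe.2 (by exact_mod_cast le_max_right n1 n2))
    rcases hp n with ⟨ha, hb⟩ | ⟨ha, hb⟩
    · rcases ha with hgt | hlt
      · exact absurd hpn1 (not_lt.2 hgt.le)
      · exact Or.inl ⟨hlt, hb⟩
    · rcases hb with hgt | hlt
      · exact absurd hpn2 (not_lt.2 hgt.le)
      · exact Or.inr ⟨hlt, ha⟩

lemma measurableSet_Sp (x : Boundary) : MeasurableSet (Sp x) := by
  rw [Sp_eq_iInter]
  exact MeasurableSet.iInter fun n => measurable_OArc (isArc_Awrap _ _) (isArc_Aoi _)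

lemma L_nonempty (M : MeasuredLamination) : M.L.Nonempty := by
  rcases Set.eq_empty_or_nonempty M.L with hL | hL
  · refine ⟨((⊥ : Boundary), ((0 : ℝ) : Boundary)), M.lam.2.2 _ ?_ ?_⟩
    · exact WithBot.bot_lt_coe 0
    · intro γ hγ
      rw [hL] at hγ
      exact absurd hγ (Set.notMem_empty γ)
  · exact hL

lemma mu_inter_L (M : MeasuredLamination) (S : Set (Boundary × Boundary)) :
    M.μ (S ∩ M.L) = M.μ S := by
  refine le_antisymm (measure_mono Set.inter_subset_left) ?_
  calc M.μ S ≤ M.μ (S ∩ M.L) + M.μ (S \ M.L) := by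
        conv_lhs => rw [← Set.inter_union_diff S M.L]
        exact measure_union_le _ _
    _ ≤ M.μ (S ∩ M.L) + M.μ M.Lᶜ :=
        add_le_add le_rfl (measure_mono (Set.diff_subset_compl _ _))
    _ = M.μ (S ∩ M.L) := by rw [M.supp, add_zero]

lemma mu_ne_top (M : MeasuredLamination) (S : Set (Boundary × Boundary)) :
    M.μ S ≠ ⊤ := by
  have huniv : (OArc Set.univ Set.univ : Set (Boundary × Boundary)) = Set.univ := by
    ext p; simp [OArc]
  have hfin := (M.pos Set.univ Set.univ isArc_univ isArc_univ
    (by rw [huniv, Set.univ_inter]; exact L_nonempty M)).2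
  rw [huniv, Set.univ_inter] at hfin
  have h1 : M.μ Set.univ = M.μ M.L := by
    rw [← mu_inter_L M Set.univ, Set.univ_inter]
  exact ((measure_mono (Set.subset_univ S)).trans_lt (h1 ▸ hfin)).ne

lemma mu_Ldiv (M : MeasuredLamination) (x : Boundary) :
    M.μ (Ldiv M.L x) = M.μ (Sp x) := by
  have heq : Ldiv M.L x = Sp x ∩ M.L := by
    ext γ
    constructor
    · rintro ⟨hγL, h1, h2⟩
      exact ⟨Or.inl ⟨h1, h2⟩, hγL⟩
    · rintro ⟨hsp, hγL⟩
      rcases hsp with ⟨h1, h2⟩ | ⟨h1, h2⟩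
      · exact ⟨hγL, h1, h2⟩
      · exact absurd ((M.lam.1 γ hγL).trans h1) (not_lt.2 h2.le)
  rw [heq, mu_inter_L]

lemma diff_le_diff (M : MeasuredLamination) {s t : Set (Boundary × Boundary)}
    (hs : MeasurableSet s) (ht : MeasurableSet t) (hle : M.μ t ≤ M.μ s) :
    M.μ (t \ s) ≤ M.μ (s \ t) := by
  have h1 : M.μ (t ∩ s) + M.μ (t \ s) = M.μ t := measure_inter_add_diff t hs
  have h2 : M.μ (s ∩ t) + M.μ (s \ t) = M.μ s := measure_inter_add_diff s ht
  rw [Set.inter_comm] at h1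
  exact ENNReal.le_of_add_le_add_left (mu_ne_top M _) (by rw [h1, h2]; exact hle)

lemma cont_above (M : MeasuredLamination) (B : ℕ → Set (Boundary × Boundary))
    (hmeas : ∀ n, MeasurableSet (B n)) (hanti : ∀ n m, n ≤ m → B m ⊆ B n)
    (hempty : (⋂ n, B n) = ∅) {m : ENNReal} (hm : 0 < m)
    (hbd : ∀ n, m ≤ M.μ (B n)) : False := by
  have hd : Directed (· ⊇ ·) B := fun n k =>
    ⟨max n k, hanti n _ (le_max_left _ _), hanti k _ (le_max_right _ _)⟩
  have hlim := Directed.measure_iInter (μ := M.μ)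
    (fun n => (hmeas n).nullMeasurableSet) hd ⟨0, mu_ne_top M _⟩
  rw [hempty, measure_empty] at hlim
  have : m ≤ 0 := hlim ▸ le_iInf hbd
  exact hm.not_ge this

lemma squeeze (M : MeasuredLamination) {i bb : Boundary} {S : Set (Boundary × Boundary)}
    (hsub : Sp i ∩ M.L ⊆ Sp bb) (hS : S ⊆ Sp bb \ Sp i) (hpos : 0 < M.μ S)
    (hle : M.μ (Sp bb) ≤ M.μ (Sp i)) : False := by
  have hkey : M.μ (Sp bb ∩ Sp i) + M.μ (Sp bb \ Sp i) = M.μ (Sp bb) :=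
    measure_inter_add_diff (Sp bb) (measurableSet_Sp i)
  have e1 : Sp bb ∩ Sp i ∩ M.L = Sp i ∩ M.L := by
    apply Set.Subset.antisymm
    · rintro γ ⟨⟨_, h2⟩, h3⟩
      exact ⟨h2, h3⟩
    · intro γ hγ
      exact ⟨⟨hsub hγ, hγ.1⟩, hγ.2⟩
  have e2 : M.μ (Sp bb ∩ Sp i) = M.μ (Sp i) := by
    rw [← mu_inter_L M (Sp bb ∩ Sp i), e1, mu_inter_L]
  have h3 : M.μ (Sp i) + M.μ S ≤ M.μ (Sp i) + 0 := by
    calc M.μ (Sp i) + M.μ S ≤ M.μ (Sp bb ∩ Sp i) + M.μ (Sp bb \ Sp i) := by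
          rw [e2]; exact add_le_add le_rfl (measure_mono hS)
      _ = M.μ (Sp bb) := hkey
      _ ≤ M.μ (Sp i) + 0 := by rw [add_zero]; exact hle
  have := ENNReal.le_of_add_le_add_left (mu_ne_top M _) h3
  exact hpos.not_ge this

lemma seq_down {a x₀ : Boundary} (h : a < x₀) :
    ∃ x : ℕ → Boundary, (∀ n, a < x n ∧ x n ≤ x₀) ∧ (∀ n m, n ≤ m → x m ≤ x n) ∧
      (∀ y, a < y → ∃ n, x n < y) := by
  have hx0 : x₀ ≠ ⊥ := (bot_le.trans_lt h).ne'
  obtain ⟨r₀, hr₀⟩ := WithBot.ne_bot_iff_exists.1 hx0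
  subst hr₀
  induction a using WithBot.recBotCoe with
  | bot =>
    refine ⟨fun n => ((r₀ - n : ℝ) : Boundary), fun n => ⟨WithBot.bot_lt_coe _, ?_⟩, ?_, ?_⟩
    · exact WithBot.coe_le_coe.2 (by have : (0:ℝ) ≤ n := Nat.cast_nonneg n; linarith)
    · intro n m hnm
      have : (n : ℝ) ≤ m := by exact_mod_cast hnm
      exact WithBot.coe_le_coe.2 (by linarith)
    · intro y hy
      obtain ⟨s, hs⟩ := WithBot.ne_bot_iff_exists.1 hy.ne'
      subst hs
      obtain ⟨n, hn⟩ := exists_nat_gt (r₀ - s)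
      exact ⟨n, WithBot.coe_lt_coe.2 (by linarith)⟩
  | coe ar =>
    have har : ar < r₀ := WithBot.coe_lt_coe.1 h
    set δ := r₀ - ar with hδ
    have hδpos : (0:ℝ) < δ := by simp [hδ]; linarith
    refine ⟨fun n => ((ar + δ / (n + 1) : ℝ) : Boundary), fun n => ⟨?_, ?_⟩, ?_, ?_⟩
    · refine WithBot.coe_lt_coe.2 ?_
      have : (0:ℝ) < δ / (n+1) := by positivity
      linarith
    · refine WithBot.coe_le_coe.2 ?_
      have h1 : δ / (n + 1) ≤ δ := by
        apply div_le_self hδpos.le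
        have : (0:ℝ) ≤ n := Nat.cast_nonneg n
        linarith
      simp only [hδ] at h1 ⊢
      linarith
    · intro n m hnm
      refine WithBot.coe_le_coe.2 ?_
      have h1 : ((n:ℝ) + 1) ≤ ((m:ℝ) + 1) := by
        have : (n:ℝ) ≤ m := by exact_mod_cast hnm
        linarith
      have h2 : δ / ((m:ℝ) + 1) ≤ δ / ((n:ℝ) + 1) := by
        apply div_le_div_of_nonneg_left hδpos.le (by positivity) h1
      linarith
    · intro y hy
      have hyne : y ≠ ⊥ := (bot_le.trans_lt hy).ne'
      obtain ⟨s, hs⟩ := WithBot.ne_bot_iff_exists.1 hyne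
      subst hs
      have hars : ar < s := WithBot.coe_lt_coe.1 hy
      obtain ⟨n, hn⟩ := exists_nat_gt (δ / (s - ar))
      refine ⟨n, WithBot.coe_lt_coe.2 ?_⟩
      have h1 : δ < n * (s - ar) := by
        rw [div_lt_iff₀ (by linarith)] at hn
        linarith [hn]
      have h2 : δ / ((n:ℝ) + 1) < s - ar := by
        rw [div_lt_iff₀ (by positivity)]
        nlinarith [hars, hδpos]
      linarith

lemma seq_up {x₀ b : Boundary} (h : x₀ < b) (hx₀ : ⊥ < x₀) :
    ∃ x : ℕ → Boundary, (∀ n, x₀ ≤ x n ∧ x n < b) ∧ (∀ n m, n ≤ m → x n ≤ x m) ∧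
      (∀ y, y < b → ∃ n, y < x n) := by
  obtain ⟨r₀, hr₀⟩ := WithBot.ne_bot_iff_exists.1 hx₀.ne'
  obtain ⟨rb, hrb⟩ := WithBot.ne_bot_iff_exists.1 (hx₀.trans h).ne'
  subst hr₀; subst hrb
  have har : r₀ < rb := WithBot.coe_lt_coe.1 h
  set δ := rb - r₀ with hδ
  have hδpos : (0:ℝ) < δ := by simp [hδ]; linarith
  refine ⟨fun n => ((rb - δ / (n + 1) : ℝ) : Boundary), fun n => ⟨?_, ?_⟩, ?_, ?_⟩
  · refine WithBot.coe_le_coe.2 ?_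
    have h1 : δ / (n + 1) ≤ δ := by
      apply div_le_self hδpos.le
      have : (0:ℝ) ≤ n := Nat.cast_nonneg n
      linarith
    simp only [hδ] at h1 ⊢
    linarith
  · refine WithBot.coe_lt_coe.2 ?_
    have : (0:ℝ) < δ / (n+1) := by positivity
    linarith
  · intro n m hnm
    refine WithBot.coe_le_coe.2 ?_
    have h1 : ((n:ℝ) + 1) ≤ ((m:ℝ) + 1) := by
      have : (n:ℝ) ≤ m := by exact_mod_cast hnm
      linarith
    have h2 : δ / ((m:ℝ) + 1) ≤ δ / ((n:ℝ) + 1) := by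
      apply div_le_div_of_nonneg_left hδpos.le (by positivity) h1
    linarith
  · intro y hy
    induction y using WithBot.recBotCoe with
    | bot => exact ⟨0, WithBot.bot_lt_coe _⟩
    | coe s =>
      have hsrb : s < rb := WithBot.coe_lt_coe.1 hy
      obtain ⟨n, hn⟩ := exists_nat_gt (δ / (rb - s))
      refine ⟨n, WithBot.coe_lt_coe.2 ?_⟩
      have h1 : δ < n * (rb - s) := by
        rw [div_lt_iff₀ (by linarith)] at hn
        linarith [hn]
      have h2 : δ / ((n:ℝ) + 1) < rb - s := by
        rw [div_lt_iff₀ (by positivity)]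
        nlinarith [hsrb, hδpos]
      linarith

lemma caseP (M : MeasuredLamination) (a b : Boundary)
    (h : ∀ x : Boundary, a < x → x < b →
      M.μ (Ldiv M.L a) ≤ M.μ (Ldiv M.L x) ∧ M.μ (Ldiv M.L b) ≤ M.μ (Ldiv M.L x))
    (γ0 : Boundary × Boundary) (hγ0 : γ0 ∈ M.L)
    (h1 : a < γ0.1) (h2 : γ0.1 < b) (h3 : b < γ0.2) : False := by
  have hnc := M.lam.2.1
  have hord := M.lam.1
  set P : Set (Boundary × Boundary) := {γ | γ ∈ M.L ∧ a < γ.1 ∧ γ.1 < b ∧ b < γ.2} with hPdef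
  have hγ0P : γ0 ∈ P := ⟨hγ0, h1, h2, h3⟩
  by_cases hI2 : ∀ y : Boundary, a < y → ∃ γ ∈ P, γ.1 < y
  · -- the infimum of left endpoints of `P` is `a`
    obtain ⟨x₀, hax₀, hx₀c⟩ := exists_between h1
    set S := OArc (Aoo x₀ b) (Aoi b) ∩ M.L with hSdef
    have hSne : S.Nonempty := ⟨γ0, Or.inl ⟨⟨hx₀c, h2⟩, h3⟩, hγ0⟩
    have hSpos : 0 < M.μ S := (M.pos _ _ (isArc_Aoo _ _) (isArc_Aoi _) hSne).1
    have hSsub : ∀ x : Boundary, x ≤ x₀ → S ⊆ Sp b \ Sp x := by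
      rintro x hx γ ⟨hmem, hγL⟩
      have hlt := hord γ hγL
      rcases hmem with ⟨⟨hxγ1, hγ1b⟩, hbγ2⟩ | ⟨hbγ1, hγ2m⟩
      · refine ⟨Or.inl ⟨hγ1b, hbγ2⟩, ?_⟩
        rintro (⟨hc1, _⟩ | ⟨hc1, hc2⟩)
        · exact absurd hc1 (not_lt.2 (hx.trans hxγ1.le))
        · exact absurd hc2 (not_lt.2 (hlt.trans hc1).le)
      · exact absurd (hlt.trans hγ2m.2) (not_lt.2 hbγ1.le)
    obtain ⟨x, hxmem, hxanti, hxdens⟩ := seq_down hax₀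
    have hxb : ∀ n, x n < b := fun n => lt_of_le_of_lt (hxmem n).2 (hx₀c.trans h2)
    have hchain : ∀ n, M.μ S ≤ M.μ (OArc Set.univ (Aoo a (x n))) := by
      intro n
      have s1 : M.μ S ≤ M.μ (Sp b \ Sp (x n)) := measure_mono (hSsub (x n) (hxmem n).2)
      have hh := (h (x n) (hxmem n).1 (hxb n)).2
      rw [mu_Ldiv, mu_Ldiv] at hh
      have s2 : M.μ (Sp b \ Sp (x n)) ≤ M.μ (Sp (x n) \ Sp b) :=
        diff_le_diff M (measurableSet_Sp (x n)) (measurableSet_Sp b) hh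
      have s3 : (Sp (x n) \ Sp b) ∩ M.L ⊆ OArc Set.univ (Aoo a (x n)) := by
        rintro γ ⟨⟨hsp, hnsp⟩, hγL⟩
        have hlt := hord γ hγL
        rcases hsp with ⟨hp1, hp2⟩ | ⟨hp1, hp2⟩
        swap
        · exact absurd hp2 (not_lt.2 (hlt.trans hp1).le)
        · have hγ1b : γ.1 < b := hp1.trans (hxb n)
          have hγ2b : γ.2 ≤ b := by
            by_contra hcon
            push_neg at hcon
            exact hnsp (Or.inl ⟨hγ1b, hcon⟩)
          have hγ1a : a < γ.1 := by
            by_contra hcon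
            push_neg at hcon
            obtain ⟨γ'', hγ''P, hγ''lt⟩ := hI2 γ.2 ((hxmem n).1.trans hp2)
            exact hnc γ hγL γ'' hγ''P.1
              (Or.inl ⟨hcon.trans_lt hγ''P.2.1, hγ''lt, hγ2b.trans_lt hγ''P.2.2.2⟩)
          exact Or.inr ⟨⟨hγ1a, hp1⟩, trivial⟩
      have s4 : M.μ (Sp (x n) \ Sp b) ≤ M.μ (OArc Set.univ (Aoo a (x n))) := by
        rw [← mu_inter_L M (Sp (x n) \ Sp b)]
        exact measure_mono s3
      exact s1.trans (s2.trans s4)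
    refine cont_above M (fun n => OArc Set.univ (Aoo a (x n)))
      (fun n => measurable_OArc isArc_univ (isArc_Aoo _ _)) ?_ ?_ hSpos hchain
    · intro n m hnm p hp
      rcases hp with ⟨hp1, hp2⟩ | ⟨hp1, hp2⟩
      · exact Or.inl ⟨trivial, ⟨hp2.1, hp2.2.trans_le (hxanti n m hnm)⟩⟩
      · exact Or.inr ⟨⟨hp1.1, hp1.2.trans_le (hxanti n m hnm)⟩, trivial⟩
    · ext p
      simp only [Set.mem_iInter, Set.mem_empty_iff_false, iff_false]
      intro hp
      have hp' : ∀ n, p.1 ∈ Aoo a (x n) ∨ p.2 ∈ Aoo a (x n) := by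
        intro n
        rcases hp n with ⟨_, hm2⟩ | ⟨hm1, _⟩
        exacts [Or.inr hm2, Or.inl hm1]
      by_cases hc : ∀ n, p.1 ∈ Aoo a (x n)
      · obtain ⟨n, hn⟩ := hxdens p.1 (hc 0).1
        exact absurd (hc n).2 (not_lt.2 hn.le)
      · push_neg at hc
        obtain ⟨n₁, hn₁⟩ := hc
        have hp2 : ∀ m, n₁ ≤ m → p.2 ∈ Aoo a (x m) := by
          intro m hm
          rcases hp' m with hmem | hmem
          · exact absurd ⟨hmem.1, hmem.2.trans_le (hxanti n₁ m hm)⟩ hn₁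
          · exact hmem
        obtain ⟨n₂, hn₂⟩ := hxdens p.2 (hp2 n₁ le_rfl).1
        exact absurd (hp2 (max n₁ n₂) (le_max_left _ _)).2
          (asymm ((hxanti n₂ _ (le_max_right _ _)).trans_lt hn₂))
  · push_neg at hI2
    obtain ⟨y, hay, hylb⟩ := hI2
    have hyb : y ≠ ⊥ := (bot_le.trans_lt hay).ne'
    obtain ⟨ry, hry⟩ := WithBot.ne_bot_iff_exists.1 hyb
    have hc0 : γ0.1 ≠ ⊥ := (bot_le.trans_lt h1).ne'
    obtain ⟨r0, hr0⟩ := WithBot.ne_bot_iff_exists.1 hc0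
    set E : Set ℝ := {r | ∃ γ ∈ P, γ.1 = ((r : ℝ) : Boundary)} with hEdef
    have hEne : E.Nonempty := ⟨r0, γ0, hγ0P, hr0.symm⟩
    have hEbdd : BddBelow E := by
      refine ⟨ry, ?_⟩
      rintro r ⟨γ, hγP, hγr⟩
      have hthis := hylb γ hγP
      rw [hγr, ← hry] at hthis
      exact_mod_cast hthis
    set i₀ : ℝ := sInf E with hi₀
    set i : Boundary := ((i₀ : ℝ) : Boundary) with hidef
    have hlb : ∀ γ ∈ P, i ≤ γ.1 := by
      intro γ hγP
      have hγb : γ.1 ≠ ⊥ := (bot_le.trans_lt hγP.2.1).ne'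
      obtain ⟨r, hr⟩ := WithBot.ne_bot_iff_exists.1 hγb
      rw [← hr, hidef]
      refine WithBot.coe_le_coe.2 ?_
      rw [hi₀]
      exact csInf_le hEbdd ⟨γ, hγP, hr.symm⟩
    have hai : a < i := by
      refine hay.trans_le ?_
      rw [← hry]
      refine WithBot.coe_le_coe.2 (le_csInf hEne ?_)
      rintro r ⟨γ, hγP, hγr⟩
      have hthis := hylb γ hγP
      rw [hγr, ← hry] at hthis
      exact_mod_cast hthis
    have hib : i < b := by
      refine lt_of_le_of_lt ?_ h2
      rw [← hr0, hidef]
      refine WithBot.coe_le_coe.2 ?_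
      rw [hi₀]
      exact csInf_le hEbdd ⟨γ0, hγ0P, hr0.symm⟩
    have hglb : ∀ y' : Boundary, i < y' → ∃ γ ∈ P, γ.1 < y' := by
      intro y' hy'
      by_contra hcon
      push_neg at hcon
      have hy'b : y' ≠ ⊥ := (bot_le.trans_lt hy').ne'
      obtain ⟨ry', hry'⟩ := WithBot.ne_bot_iff_exists.1 hy'b
      have hle' : ry' ≤ i₀ := by
        refine le_csInf hEne ?_
        rintro r ⟨γ, hγP, hγr⟩
        have hthis := hcon γ hγP
        rw [hγr, ← hry'] at hthis
        exact_mod_cast hthis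
      rw [← hry'] at hy'
      refine absurd hy' (not_lt.2 ?_)
      rw [hidef]
      exact WithBot.coe_le_coe.2 hle'
    have claim1 : ∀ γ ∈ M.L, γ.1 < i → i < γ.2 → b < γ.2 := by
      intro γ hγL hγ1 hγ2
      by_contra hcon
      push_neg at hcon
      obtain ⟨γ'', hγ''P, hγ''lt⟩ := hglb γ.2 hγ2
      exact hnc γ hγL γ'' hγ''P.1
        (Or.inl ⟨hγ1.trans_le (hlb γ'' hγ''P), hγ''lt, hcon.trans_lt hγ''P.2.2.2⟩)
    set S := OArc (Aoo a b) (Aoi b) ∩ M.L with hSdef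
    have hSpos : 0 < M.μ S :=
      (M.pos _ _ (isArc_Aoo _ _) (isArc_Aoi _) ⟨γ0, Or.inl ⟨⟨h1, h2⟩, h3⟩, hγ0⟩).1
    have hsub : Sp i ∩ M.L ⊆ Sp b := by
      rintro γ ⟨hsp, hγL⟩
      have hlt := hord γ hγL
      rcases hsp with ⟨hp1, hp2⟩ | ⟨hp1, hp2⟩
      · exact Or.inl ⟨hp1.trans hib, claim1 γ hγL hp1 hp2⟩
      · exact absurd hp2 (not_lt.2 (hlt.trans hp1).le)
    have hS : S ⊆ Sp b \ Sp i := by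
      rintro γ ⟨hmem, hγL⟩
      have hlt := hord γ hγL
      rcases hmem with ⟨⟨haγ1, hγ1b⟩, hbγ2⟩ | ⟨hbγ1, hγ2m⟩
      · refine ⟨Or.inl ⟨hγ1b, hbγ2⟩, ?_⟩
        rintro (⟨hc1, _⟩ | ⟨hc1, hc2⟩)
        · exact absurd hc1 (not_lt.2 (hlb γ ⟨hγL, haγ1, hγ1b, hbγ2⟩))
        · exact absurd hc2 (not_lt.2 (hlt.trans hc1).le)
      · exact absurd (hlt.trans hγ2m.2) (not_lt.2 hbγ1.le)
    have hle := (h i hai hib).2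
    rw [mu_Ldiv, mu_Ldiv] at hle
    exact squeeze M hsub hS hSpos hle

lemma caseQ (M : MeasuredLamination) (a b : Boundary)
    (h : ∀ x : Boundary, a < x → x < b →
      M.μ (Ldiv M.L a) ≤ M.μ (Ldiv M.L x) ∧ M.μ (Ldiv M.L b) ≤ M.μ (Ldiv M.L x))
    (hPe : ∀ δ ∈ M.L, ¬(a < δ.1 ∧ δ.1 < b ∧ b < δ.2))
    (γ0 : Boundary × Boundary) (hγ0 : γ0 ∈ M.L)
    (h1 : γ0.1 < a) (h2 : a < γ0.2) (h3 : γ0.2 < b) : False := by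
  have hnc := M.lam.2.1
  have hord := M.lam.1
  set Q : Set (Boundary × Boundary) := {γ | γ ∈ M.L ∧ γ.1 < a ∧ a < γ.2 ∧ γ.2 < b} with hQdef
  have hγ0Q : γ0 ∈ Q := ⟨hγ0, h1, h2, h3⟩
  by_cases hII2 : ∀ y : Boundary, y < b → ∃ γ ∈ Q, y < γ.2
  · -- the supremum of right endpoints of `Q` is `b`
    obtain ⟨x₀, hdx₀, hx₀b⟩ := exists_between h3
    set S := OArc (Aoo a x₀) (Awrap b a) ∩ M.L with hSdef
    have hSchar : S ⊆ {γ | γ ∈ M.L ∧ γ.1 < a ∧ a < γ.2 ∧ γ.2 < x₀} := by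
      rintro γ ⟨hmem, hγL⟩
      have hlt := hord γ hγL
      rcases hmem with ⟨⟨haγ1, hγ1x⟩, hw⟩ | ⟨hw, haγ2, hγ2x⟩
      · rcases hw with hbγ2 | hγ2a
        · exact absurd ⟨haγ1, hγ1x.trans hx₀b, hbγ2⟩ (hPe γ hγL)
        · exact absurd (hlt.trans hγ2a) (not_lt.2 haγ1.le)
      · rcases hw with hbγ1 | hγ1a
        · exact absurd (hbγ1.trans (hlt.trans hγ2x)) (not_lt.2 hx₀b.le)
        · exact ⟨hγL, hγ1a, haγ2, hγ2x⟩
    have hSne : S.Nonempty := ⟨γ0, Or.inr ⟨Or.inr h1, h2, hdx₀⟩, hγ0⟩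
    have hSpos : 0 < M.μ S := (M.pos _ _ (isArc_Aoo _ _) (isArc_Awrap _ _) hSne).1
    have hSsub : ∀ x : Boundary, x₀ ≤ x → S ⊆ Sp a \ Sp x := by
      intro x hx γ hγS
      obtain ⟨hγL, hγ1a, haγ2, hγ2x⟩ := hSchar hγS
      refine ⟨Or.inl ⟨hγ1a, haγ2⟩, ?_⟩
      rintro (⟨hc1, hc2⟩ | ⟨hc1, hc2⟩)
      · exact absurd hc2 (not_lt.2 (hγ2x.trans_le hx).le)
      · exact absurd hc2 (not_lt.2 ((hord γ hγL).trans hc1).le)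
    have hbotx₀ : (⊥ : Boundary) < x₀ := bot_le.trans_lt (h2.trans hdx₀)
    obtain ⟨x, hxmem, hxmono, hxdens⟩ := seq_up hx₀b hbotx₀
    have hax : ∀ n, a < x n := fun n => lt_of_lt_of_le (h2.trans hdx₀) (hxmem n).1
    have hchain : ∀ n, M.μ S ≤ M.μ (OArc Set.univ (Aoo (x n) b)) := by
      intro n
      have s1 : M.μ S ≤ M.μ (Sp a \ Sp (x n)) := measure_mono (hSsub (x n) (hxmem n).1)
      have hh := (h (x n) (hax n) (hxmem n).2).1
      rw [mu_Ldiv, mu_Ldiv] at hh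
      have s2 : M.μ (Sp a \ Sp (x n)) ≤ M.μ (Sp (x n) \ Sp a) :=
        diff_le_diff M (measurableSet_Sp (x n)) (measurableSet_Sp a) hh
      have s3 : (Sp (x n) \ Sp a) ∩ M.L ⊆ OArc Set.univ (Aoo (x n) b) := by
        rintro γ ⟨⟨hsp, hnsp⟩, hγL⟩
        have hlt := hord γ hγL
        rcases hsp with ⟨hp1, hp2⟩ | ⟨hp1, hp2⟩
        swap
        · exact absurd hp2 (not_lt.2 (hlt.trans hp1).le)
        · have haγ1 : a ≤ γ.1 := by
            by_contra hcon
            push_neg at hcon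
            exact hnsp (Or.inl ⟨hcon, (hax n).trans hp2⟩)
          have hγ2b : γ.2 < b := by
            by_contra hcon
            push_neg at hcon
            obtain ⟨γ'', hγ''Q, hγ''lt⟩ := hII2 γ.1 (hp1.trans (hxmem n).2)
            exact hnc γ'' hγ''Q.1 γ hγL
              (Or.inl ⟨hγ''Q.2.1.trans_le haγ1, hγ''lt, hγ''Q.2.2.2.trans_le hcon⟩)
          exact Or.inl ⟨trivial, ⟨hp2, hγ2b⟩⟩
      have s4 : M.μ (Sp (x n) \ Sp a) ≤ M.μ (OArc Set.univ (Aoo (x n) b)) := by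
        rw [← mu_inter_L M (Sp (x n) \ Sp a)]
        exact measure_mono s3
      exact s1.trans (s2.trans s4)
    refine cont_above M (fun n => OArc Set.univ (Aoo (x n) b))
      (fun n => measurable_OArc isArc_univ (isArc_Aoo _ _)) ?_ ?_ hSpos hchain
    · intro n m hnm p hp
      rcases hp with ⟨hp1, hp2⟩ | ⟨hp1, hp2⟩
      · exact Or.inl ⟨trivial, ⟨(hxmono n m hnm).trans_lt hp2.1, hp2.2⟩⟩
      · exact Or.inr ⟨⟨(hxmono n m hnm).trans_lt hp1.1, hp1.2⟩, trivial⟩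
    · ext p
      simp only [Set.mem_iInter, Set.mem_empty_iff_false, iff_false]
      intro hp
      have hp' : ∀ n, p.1 ∈ Aoo (x n) b ∨ p.2 ∈ Aoo (x n) b := by
        intro n
        rcases hp n with ⟨_, hm2⟩ | ⟨hm1, _⟩
        exacts [Or.inr hm2, Or.inl hm1]
      by_cases hc : ∀ n, p.1 ∈ Aoo (x n) b
      · obtain ⟨n, hn⟩ := hxdens p.1 (hc 0).2
        exact absurd (hc n).1 (not_lt.2 hn.le)
      · push_neg at hc
        obtain ⟨n₁, hn₁⟩ := hc
        have hp2 : ∀ m, n₁ ≤ m → p.2 ∈ Aoo (x m) b := by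
          intro m hm
          rcases hp' m with hmem | hmem
          · exact absurd ⟨(hxmono n₁ m hm).trans_lt hmem.1, hmem.2⟩ hn₁
          · exact hmem
        obtain ⟨n₂, hn₂⟩ := hxdens p.2 (hp2 n₁ le_rfl).2
        exact absurd (hp2 (max n₁ n₂) (le_max_left _ _)).1
          (asymm (hn₂.trans_le (hxmono n₂ _ (le_max_right _ _))))
  · push_neg at hII2
    obtain ⟨y, hyb, hyub⟩ := hII2
    have hd0 : γ0.2 ≠ ⊥ := (bot_le.trans_lt h2).ne'
    obtain ⟨r0, hr0⟩ := WithBot.ne_bot_iff_exists.1 hd0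
    have hyne : y ≠ ⊥ := by
      have := hyub γ0 hγ0Q
      exact (bot_le.trans_lt (h2.trans_le this)).ne'
    obtain ⟨ry, hry⟩ := WithBot.ne_bot_iff_exists.1 hyne
    set E : Set ℝ := {r | ∃ γ ∈ Q, γ.2 = ((r : ℝ) : Boundary)} with hEdef
    have hEne : E.Nonempty := ⟨r0, γ0, hγ0Q, hr0.symm⟩
    have hEbdd : BddAbove E := by
      refine ⟨ry, ?_⟩
      rintro r ⟨γ, hγQ, hγr⟩
      have hthis := hyub γ hγQ
      rw [hγr, ← hry] at hthis
      exact_mod_cast hthis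
    set j₀ : ℝ := sSup E with hj₀
    set j : Boundary := ((j₀ : ℝ) : Boundary) with hjdef
    have hub : ∀ γ ∈ Q, γ.2 ≤ j := by
      intro γ hγQ
      have hγb : γ.2 ≠ ⊥ := (bot_le.trans_lt hγQ.2.2.1).ne'
      obtain ⟨r, hr⟩ := WithBot.ne_bot_iff_exists.1 hγb
      rw [← hr, hjdef]
      refine WithBot.coe_le_coe.2 ?_
      rw [hj₀]
      exact le_csSup hEbdd ⟨γ, hγQ, hr.symm⟩
    have haj : a < j := by
      refine h2.trans_le ?_
      rw [← hr0, hjdef]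
      refine WithBot.coe_le_coe.2 ?_
      rw [hj₀]
      exact le_csSup hEbdd ⟨γ0, hγ0Q, hr0.symm⟩
    have hjb : j < b := by
      refine lt_of_le_of_lt ?_ hyb
      rw [← hry]
      refine WithBot.coe_le_coe.2 (csSup_le hEne ?_)
      rintro r ⟨γ, hγQ, hγr⟩
      have hthis := hyub γ hγQ
      rw [hγr, ← hry] at hthis
      exact_mod_cast hthis
    have hlub : ∀ y' : Boundary, y' < j → ∃ γ ∈ Q, y' < γ.2 := by
      intro y' hy'
      by_contra hcon
      push_neg at hcon
      induction y' using WithBot.recBotCoe with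
      | bot => exact absurd (hcon γ0 hγ0Q) (not_le.2 (bot_le.trans_lt h2))
      | coe ry' =>
        have hle' : j₀ ≤ ry' := by
          refine csSup_le hEne ?_
          rintro r ⟨γ, hγQ, hγr⟩
          have hthis := hcon γ hγQ
          rw [hγr] at hthis
          exact_mod_cast hthis
        refine absurd hy' (not_lt.2 ?_)
        rw [hjdef]
        exact WithBot.coe_le_coe.2 hle'
    have claim1 : ∀ γ ∈ M.L, γ.1 < j → j < γ.2 → γ.1 < a := by
      intro γ hγL hγ1 hγ2
      by_contra hcon
      push_neg at hcon
      obtain ⟨γ'', hγ''Q, hγ''lt⟩ := hlub γ.1 hγ1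
      exact hnc γ'' hγ''Q.1 γ hγL
        (Or.inl ⟨hγ''Q.2.1.trans_le hcon, hγ''lt, (hub γ'' hγ''Q).trans_lt hγ2⟩)
    set S := OArc (Aoo a b) (Awrap b a) ∩ M.L with hSdef
    have hSchar : S ⊆ Q := by
      rintro γ ⟨hmem, hγL⟩
      have hlt := hord γ hγL
      rcases hmem with ⟨⟨haγ1, hγ1b⟩, hw⟩ | ⟨hw, haγ2, hγ2b⟩
      · rcases hw with hbγ2 | hγ2a
        · exact absurd ⟨haγ1, hγ1b, hbγ2⟩ (hPe γ hγL)
        · exact absurd (hlt.trans hγ2a) (not_lt.2 haγ1.le)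
      · rcases hw with hbγ1 | hγ1a
        · exact absurd (hbγ1.trans (hlt.trans hγ2b)) (lt_irrefl b)
        · exact ⟨hγL, hγ1a, haγ2, hγ2b⟩
    have hSne : S.Nonempty := ⟨γ0, Or.inr ⟨Or.inr h1, h2, h3⟩, hγ0⟩
    have hSpos : 0 < M.μ S := (M.pos _ _ (isArc_Aoo _ _) (isArc_Awrap _ _) hSne).1
    have hsub : Sp j ∩ M.L ⊆ Sp a := by
      rintro γ ⟨hsp, hγL⟩
      have hlt := hord γ hγL
      rcases hsp with ⟨hp1, hp2⟩ | ⟨hp1, hp2⟩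
      · exact Or.inl ⟨claim1 γ hγL hp1 hp2, haj.trans hp2⟩
      · exact absurd hp2 (not_lt.2 (hlt.trans hp1).le)
    have hS : S ⊆ Sp a \ Sp j := by
      intro γ hγS
      obtain ⟨hγL, hγ1a, haγ2, hγ2b⟩ := hSchar hγS
      refine ⟨Or.inl ⟨hγ1a, haγ2⟩, ?_⟩
      rintro (⟨hc1, hc2⟩ | ⟨hc1, hc2⟩)
      · exact absurd hc2 (not_lt.2 (hub γ (hSchar hγS)))
      · exact absurd hc2 (not_lt.2 ((hord γ hγL).trans hc1).le)
    have hle := (h j haj hjb).1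
    rw [mu_Ldiv, mu_Ldiv] at hle
    exact squeeze M hsub hS hSpos hle

end Lam410

open Lam410

/-- Lemma 4.10:  if `a < b` are boundary points such that `𝓜(L/x) ≥ 𝓜(L/a)` and
`𝓜(L/x) ≥ 𝓜(L/b)` for every `x ∈ (a, b)`, then the geodesic `{a, b}` belongs to `L`. -/
theorem geodesic_mem_of_measure_min (M : MeasuredLamination) (a b : Boundary)
    (hab : a < b)
    (h : ∀ x : Boundary, a < x → x < b →
      M.μ (Ldiv M.L a) ≤ M.μ (Ldiv M.L x) ∧ M.μ (Ldiv M.L b) ≤ M.μ (Ldiv M.L x)) :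
    (a, b) ∈ M.L := by
  refine M.lam.2.2 (a, b) hab ?_
  intro γ hγ hcross
  exfalso
  rcases hcross with ⟨hc1, hc2, hc3⟩ | ⟨hc1, hc2, hc3⟩
  · exact caseP M a b h γ hγ hc1 hc2 hc3
  · by_cases hP : ∃ δ ∈ M.L, a < δ.1 ∧ δ.1 < b ∧ b < δ.2
    · obtain ⟨δ, hδ, hh1, hh2, hh3⟩ := hP
      exact caseP M a b h δ hδ hh1 hh2 hh3
    · have hPe : ∀ δ ∈ M.L, ¬(a < δ.1 ∧ δ.1 < b ∧ b < δ.2) :=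
        fun δ hδ hcon => hP ⟨δ, hδ, hcon⟩
      exact caseQ M a b h hPe γ hγ hc1 hc2 hc3

end
end
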